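/- arXiv:math/0701710 — 11 statements merged into one kernel-verified Lean document; each statement's English description precedes it below -/
import Mathlib

section
/- With σ, M, ⊕ as above, and i⊖j = i-j-2m·σ(i-j), for all i,j,k∈M: -σ(i+j)+σ(1-(i⊕j)+k) = σ(1-j+k) - σ(i+(j⊖k)). -/
/-- The function σ from the paper: σ(i)=1 if i>m, 0 if i ∈ M = {-m+1,...,m}, -1 if i<1-m. -/
def sgnM (m : ℕ) (i : ℤ) : ℤ :=
  if (m : ℤ) < i then 1 else if i < 1 - (m : ℤ) then -1 else 0

/-- Addition modulo 2m inside M: i ⊕ j = i + j - 2m·σ(i+j). -/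
def oplusM (m : ℕ) (i j : ℤ) : ℤ := i + j - 2 * m * sgnM m (i + j)

/-- Subtraction modulo 2m inside M: i ⊖ j = i - j - 2m·σ(i-j). -/
def ominusM (m : ℕ) (i j : ℤ) : ℤ := i - j - 2 * m * sgnM m (i - j)

set_option maxHeartbeats 2000000 in
theorem stmt1 (m : ℕ) (hm : 0 < m) (i j k : ℤ)
    (hi : i ∈ Set.Icc (1 - (m : ℤ)) (m : ℤ))
    (hj : j ∈ Set.Icc (1 - (m : ℤ)) (m : ℤ))
    (hk : k ∈ Set.Icc (1 - (m : ℤ)) (m : ℤ)) :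
    -sgnM m (i + j) + sgnM m (1 - oplusM m i j + k)
      = sgnM m (1 - j + k) - sgnM m (i + ominusM m j k) := by
  obtain ⟨hi1, hi2⟩ := hi
  obtain ⟨hj1, hj2⟩ := hj
  obtain ⟨hk1, hk2⟩ := hk
  simp only [sgnM, oplusM, ominusM]
  split_ifs <;> omega
end

section
/- Let G be a group, S a normal subgroup with G/S cyclic of order 2m generated by α, and h ≠ 1 a central element of G lying in S. Identify G with the disjoint union of cosets α^i for i∈M={-m+1,...,m}, and define x*y = xy·h^{σ(i+j)} for x∈α^i, y∈α^j. Then (G,*) is a group. -/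
/-- The cyclic construction: x * y · h^{σ(ind x + ind y)}. -/
def cmul (m : ℕ) {G : Type*} [Group G] (ind : G → ℤ) (h : G) (x y : G) : G :=
  x * y * h ^ (sgnM m (ind x + ind y))

lemma small_of_dvd (n k d : ℤ) (hd : d = n * k) (h1 : -n < d) (h2 : d < n) : d = 0 := by
  rcases lt_trichotomy k 0 with hh|hh|hh
  · nlinarith
  · simp [hh] at hd; omega
  · nlinarith

set_option maxHeartbeats 1000000 in
lemma sgnM_assoc (m : ℕ) (hm : 0 < m) (a b c r1 r2 : ℤ)
    (ha1 : 1 - (m:ℤ) ≤ a) (ha2 : a ≤ m) (hb1 : 1 - (m:ℤ) ≤ b) (hb2 : b ≤ m)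
    (hc1 : 1 - (m:ℤ) ≤ c) (hc2 : c ≤ m) (hr11 : 1 - (m:ℤ) ≤ r1) (hr12 : r1 ≤ m)
    (hr21 : 1 - (m:ℤ) ≤ r2) (hr22 : r2 ≤ m)
    (hd1 : (2*(m:ℤ)) ∣ a + b - r1) (hd2 : (2*(m:ℤ)) ∣ b + c - r2) :
    sgnM m (a+b) + sgnM m (r1+c) = sgnM m (b+c) + sgnM m (a+r2) := by
  obtain ⟨k1, hk1⟩ := hd1
  obtain ⟨k2, hk2⟩ := hd2
  have hm' : (0:ℤ) < m := by exact_mod_cast hm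
  have hk1' : k1 = -1 ∨ k1 = 0 ∨ k1 = 1 := by
    by_contra hcon
    have : k1 ≤ -2 ∨ 2 ≤ k1 := by omega
    rcases this with hh|hh <;> nlinarith
  have hk2' : k2 = -1 ∨ k2 = 0 ∨ k2 = 1 := by
    by_contra hcon
    have : k2 ≤ -2 ∨ 2 ≤ k2 := by omega
    rcases this with hh|hh <;> nlinarith
  have H1 : a+b-r1 = -(2*(m:ℤ)) ∨ a+b-r1 = 0 ∨ a+b-r1 = 2*(m:ℤ) := by
    rcases hk1' with h|h|h <;> subst h <;> omega
  have H2 : b+c-r2 = -(2*(m:ℤ)) ∨ b+c-r2 = 0 ∨ b+c-r2 = 2*(m:ℤ) := by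
    rcases hk2' with h|h|h <;> subst h <;> omega
  clear hk1 hk2
  simp only [sgnM]
  split_ifs <;> omega

/-- Cyclic construction for groups: if S ⊴ G with G/S cyclic of order 2m generated
by α (encoded by the surjective homomorphism f onto ZMod (2m), with kernel S, so
that x ∈ α^{ind x} where ind x ∈ M is the representative of f x), and 1 ≠ h is a
central element of G lying in S, then (G,*) is a group. -/
theorem stmt3 (m : ℕ) (hm : 0 < m) (G : Type*) [Group G]
    (f : G → ZMod (2 * m)) (hf : ∀ x y : G, f (x * y) = f x + f y)
    (hfsurj : Function.Surjective f)
    (S : Subgroup G) (hSker : ∀ x : G, x ∈ S ↔ f x = 0)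
    (ind : G → ℤ)
    (hindM : ∀ x : G, ind x ∈ Set.Icc (1 - (m : ℤ)) (m : ℤ))
    (hind : ∀ x : G, ((ind x : ZMod (2 * m))) = f x)
    (h : G) (hh1 : h ≠ 1) (hhS : h ∈ S) (hhZ : h ∈ Subgroup.center G) :
    (∀ x : G, cmul m ind h 1 x = x ∧ cmul m ind h x 1 = x) ∧
    (∀ x : G, ∃ y : G, cmul m ind h x y = 1 ∧ cmul m ind h y x = 1) ∧
    (∀ x y z : G, cmul m ind h (cmul m ind h x y) z = cmul m ind h x (cmul m ind h y z)) := by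
  have hm' : (0:ℤ) < m := by exact_mod_cast hm
  have hf1 : f 1 = 0 := by
    have h2 := hf 1 1
    rw [one_mul] at h2
    exact (left_eq_add.mp h2)
  have hfS : ∀ {x : G}, x ∈ S → f x = 0 := fun hx => (hSker _).mp hx
  have hfh : ∀ e : ℤ, f (h ^ e) = 0 := fun e => hfS (S.zpow_mem hhS e)
  have hcen : ∀ (e : ℤ) (g : G), g * h ^ e = h ^ e * g := fun e g =>
    Subgroup.mem_center_iff.mp (Subgroup.zpow_mem _ hhZ e) g
  -- ind is determined by f
  have hmoddvd : ∀ x y : G, f x = f y → ((2*m : ℕ) : ℤ) ∣ ind y - ind x := by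
    intro x y hxy
    have h1 : ((ind x : ZMod (2*m))) = ((ind y : ZMod (2*m))) := by
      rw [hind, hind, hxy]
    exact (ZMod.intCast_eq_intCast_iff _ _ _).mp h1 |>.dvd
  have hindeq : ∀ x y : G, f x = f y → ind x = ind y := by
    intro x y hxy
    obtain ⟨k, hk⟩ := hmoddvd x y hxy
    have hx := hindM x; have hy := hindM y
    simp only [Set.mem_Icc] at hx hy
    have : ind y - ind x = 0 := by
      apply small_of_dvd ((2*m : ℕ) : ℤ) k _ hk <;> push_cast <;> omega
    omega
  have hdvd2 : ∀ x y : G, (2*(m:ℤ)) ∣ ind x + ind y - ind (x*y) := by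
    intro x y
    have h1 : ((ind (x*y) : ZMod (2*m))) = (((ind x + ind y : ℤ) : ZMod (2*m))) := by
      push_cast
      rw [hind, hind, hind, hf]
    have := (ZMod.intCast_eq_intCast_iff _ _ _).mp h1 |>.dvd
    have h2 : ((2*m : ℕ) : ℤ) = 2*(m:ℤ) := by push_cast; ring
    rwa [h2] at this
  have hind1 : ind 1 = 0 := by
    have := hmoddvd 1 1 rfl
    obtain ⟨k, hk⟩ := hmoddvd (1*1) 1 (by rw [one_mul])
    -- direct approach: cast
    have hz : ((ind 1 : ZMod (2*m))) = 0 := by rw [hind, hf1]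
    have hdvd : ((2*m : ℕ) : ℤ) ∣ ind 1 := (ZMod.intCast_zmod_eq_zero_iff_dvd _ _).mp hz
    obtain ⟨j, hj⟩ := hdvd
    have h1 := hindM 1
    simp only [Set.mem_Icc] at h1
    have : ind 1 = 0 := by
      apply small_of_dvd ((2*m : ℕ) : ℤ) j _ (by omega) <;> push_cast <;> omega
    exact this
  have hσ0 : ∀ i : ℤ, 1 - (m:ℤ) ≤ i → i ≤ m → sgnM m i = 0 := by
    intro i h1 h2
    simp only [sgnM]
    split_ifs <;> omega
  refine ⟨?_, ?_, ?_⟩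
  · intro x
    have hx := hindM x
    simp only [Set.mem_Icc] at hx
    constructor
    · show 1 * x * h ^ (sgnM m (ind 1 + ind x)) = x
      rw [hind1, zero_add, hσ0 _ hx.1 hx.2, zpow_zero, mul_one, one_mul]
    · show x * 1 * h ^ (sgnM m (ind x + ind 1)) = x
      rw [hind1, add_zero, hσ0 _ hx.1 hx.2, zpow_zero, mul_one, mul_one]
  · intro x
    set e : ℤ := sgnM m (ind x + ind x⁻¹) with he
    refine ⟨x⁻¹ * h ^ (-e), ?_, ?_⟩
    · show x * (x⁻¹ * h ^ (-e)) * h ^ (sgnM m (ind x + ind (x⁻¹ * h ^ (-e)))) = 1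
      have hiy : ind (x⁻¹ * h ^ (-e)) = ind x⁻¹ :=
        hindeq _ _ (by rw [hf, hfh, add_zero])
      rw [hiy, ← he]
      group
    · show x⁻¹ * h ^ (-e) * x * h ^ (sgnM m (ind (x⁻¹ * h ^ (-e)) + ind x)) = 1
      have hiy : ind (x⁻¹ * h ^ (-e)) = ind x⁻¹ :=
        hindeq _ _ (by rw [hf, hfh, add_zero])
      rw [hiy, add_comm (ind x⁻¹), ← he, mul_assoc x⁻¹, ← hcen (-e) x]
      group
  · intro x y z
    have hx := hindM x; have hy := hindM y; have hz := hindM z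
    have hxy := hindM (x*y); have hyz := hindM (y*z)
    simp only [Set.mem_Icc] at hx hy hz hxy hyz
    simp only [cmul]
    have h1 : ind (x * y * h ^ sgnM m (ind x + ind y)) = ind (x*y) :=
      hindeq _ _ (by rw [hf, hfh, add_zero])
    have h2 : ind (y * z * h ^ sgnM m (ind y + ind z)) = ind (y*z) :=
      hindeq _ _ (by rw [hf, hfh, add_zero])
    rw [h1, h2]
    have key := sgnM_assoc m hm (ind x) (ind y) (ind z) (ind (x*y)) (ind (y*z))
      hx.1 hx.2 hy.1 hy.2 hz.1 hz.2 hxy.1 hxy.2 hyz.1 hyz.2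
      (hdvd2 x y) (hdvd2 y z)
    have hmove : ∀ (e s : ℤ), x * y * h ^ e * z * h ^ s = x * y * z * h ^ (e + s) := by
      intro e s
      rw [zpow_add, mul_assoc (x*y) (h^e) z, ← hcen e z]
      simp only [mul_assoc]
    rw [hmove]
    have hmove2 : ∀ (e s : ℤ), x * (y * z * h ^ e) * h ^ s = x * y * z * h ^ (e + s) := by
      intro e s
      rw [zpow_add]
      simp only [mul_assoc]
    rw [hmove2, key]
end

section
/- Let G be a group, S a normal subgroup with G/S dihedral of order 4m, β,γ involutions of G/S with α=βγ of order 2m, G₀ the union of the cosets α^i (i∈M) and G₁ = G∖G₀, and h≠1 an element of S∩Z(G₀) with hxh=x for every x∈G₁. Choose e∈β, f∈γ and define x*y = xy·h^{(-1)^r σ(i+j)} for x∈α^i∪eα^i, y∈(α^j∪α^j f)∩G_r. Then (G,*) is a group. -/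
/-- The dihedral construction: x * y · h^{(-1)^r σ(i+j)}, where every element
x of G lies in the coset β^{fr x} α^{ii x} of S, so that the "left index" of x
(i.e. x ∈ α^i ∪ eα^i) is i = ii x, the "right index" of y (i.e. y ∈ α^j ∪ α^j f,
using α^j γ = β α^{1-j}) is j = ii y if fr y = 0 and j = 1 - ii y if fr y = 1,
and r = fr y records whether y ∈ G₀ or y ∈ G₁. -/
def dmul (m : ℕ) {G : Type*} [Group G] (fr : G → ZMod 2) (ii : G → ℤ) (h : G)
    (x y : G) : G :=
  if fr y = 0 then x * y * h ^ (sgnM m (ii x + ii y))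
  else x * y * h ^ (-sgnM m (ii x + (1 - ii y)))


set_option maxHeartbeats 4000000 in
private lemma dih00 (m : ℕ) (i j k : ℤ) (hm : 1 ≤ (m:ℤ)) (h1 : 1-m ≤ i) (h2 : i ≤ m)
    (h3 : 1-m ≤ j) (h4 : j ≤ m) (h5 : 1-m ≤ k) (h6 : k ≤ m) :
    sgnM m (i + j) + sgnM m (i + j - 2*(m:ℤ)*sgnM m (i + j) + k)
      = sgnM m (j + k) + sgnM m (i + (j + k - 2*(m:ℤ)*sgnM m (j + k))) := by
  unfold sgnM; split_ifs <;> omega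

set_option maxHeartbeats 4000000 in
private lemma dih01 (m : ℕ) (i j k : ℤ) (hm : 1 ≤ (m:ℤ)) (h1 : 1-m ≤ i) (h2 : i ≤ m)
    (h3 : 1-m ≤ j) (h4 : j ≤ m) (h5 : 1-m ≤ k) (h6 : k ≤ m) :
    -sgnM m (i + j - 2*(m:ℤ)*sgnM m (i + j) + (1 - k)) - sgnM m (i + j)
      = -sgnM m (j + (1 - k)) + -sgnM m (i + (1 - (k - j - 2*(m:ℤ)*sgnM m (k - j)))) := by
  unfold sgnM; split_ifs <;> omega

set_option maxHeartbeats 4000000 in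
private lemma dih10 (m : ℕ) (i j k : ℤ) (hm : 1 ≤ (m:ℤ)) (h1 : 1-m ≤ i) (h2 : i ≤ m)
    (h3 : 1-m ≤ j) (h4 : j ≤ m) (h5 : 1-m ≤ k) (h6 : k ≤ m) :
    -sgnM m (i + (1 - j)) + sgnM m (j - i - 2*(m:ℤ)*sgnM m (j - i) + k)
      = sgnM m (j + k) + -sgnM m (i + (1 - (j + k - 2*(m:ℤ)*sgnM m (j + k)))) := by
  unfold sgnM; split_ifs <;> omega

set_option maxHeartbeats 4000000 in
private lemma dih11 (m : ℕ) (i j k : ℤ) (hm : 1 ≤ (m:ℤ)) (h1 : 1-m ≤ i) (h2 : i ≤ m)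
    (h3 : 1-m ≤ j) (h4 : j ≤ m) (h5 : 1-m ≤ k) (h6 : k ≤ m) :
    -sgnM m (j - i - 2*(m:ℤ)*sgnM m (j - i) + (1 - k)) - -sgnM m (i + (1 - j))
      = -sgnM m (j + (1 - k)) + sgnM m (i + (k - j - 2*(m:ℤ)*sgnM m (k - j))) := by
  unfold sgnM; split_ifs <;> omega

set_option maxHeartbeats 1600000

/-- Dihedral construction for groups.  The quotient G/S being dihedral of order 4m,
generated by the involutions β, γ with α = βγ of order 2m, is encoded by the pair
of index maps fi : G → ZMod (2m), fr : G → ZMod 2, expressing that x lies in the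
coset β^{fr x} α^{fi x} of S; the multiplication rules of the dihedral group give
the stated compatibility of fi, fr with multiplication, surjectivity says the
quotient has order exactly 4m, and S is the fibre over (0,0).  The element h ≠ 1
lies in S, centralizes G₀ = {x : fr x = 0} (the union of the cosets α^i), and
satisfies hxh = x for all x ∈ G₁ = G∖G₀.  Then (G,*) is a group. -/
theorem stmt4 (m : ℕ) (hm : 0 < m) (G : Type*) [Group G]
    (fi : G → ZMod (2 * m)) (fr : G → ZMod 2)
    (hfr : ∀ x y : G, fr (x * y) = fr x + fr y)
    (hfi : ∀ x y : G, fi (x * y) = (if fr y = 0 then fi x else -fi x) + fi y)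
    (hsurj : ∀ p : ZMod (2 * m) × ZMod 2, ∃ x : G, fi x = p.1 ∧ fr x = p.2)
    (S : Subgroup G) (hSker : ∀ x : G, x ∈ S ↔ (fi x = 0 ∧ fr x = 0))
    (ii : G → ℤ)
    (hiiM : ∀ x : G, ii x ∈ Set.Icc (1 - (m : ℤ)) (m : ℤ))
    (hii : ∀ x : G, ((ii x : ZMod (2 * m))) = fi x)
    (h : G) (hh1 : h ≠ 1) (hhS : h ∈ S)
    (hhZ0 : ∀ x : G, fr x = 0 → h * x = x * h)
    (hhG1 : ∀ x : G, fr x ≠ 0 → h * x * h = x) :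
    (∀ x : G, dmul m fr ii h 1 x = x ∧ dmul m fr ii h x 1 = x) ∧
    (∀ x : G, ∃ y : G, dmul m fr ii h x y = 1 ∧ dmul m fr ii h y x = 1) ∧
    (∀ x y z : G,
      dmul m fr ii h (dmul m fr ii h x y) z = dmul m fr ii h x (dmul m fr ii h y z)) := by
  have hmz : (1:ℤ) ≤ (m:ℤ) := by exact_mod_cast hm
  haveI : NeZero (2*m) := ⟨by omega⟩
  have hfr1 : fr 1 = 0 := by
    have h1 := hfr 1 1; rw [one_mul] at h1; exact (left_eq_add.mp h1)
  have hfi1 : fi 1 = 0 := by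
    have h1 := hfi 1 1; rw [one_mul, if_pos hfr1] at h1; exact (left_eq_add.mp h1)
  have hSh : ∀ a : ℤ, h ^ a ∈ S := fun a => S.zpow_mem hhS a
  have frh : ∀ a : ℤ, fr (h ^ a) = 0 := fun a => ((hSker _).mp (hSh a)).2
  have fih : ∀ a : ℤ, fi (h ^ a) = 0 := fun a => ((hSker _).mp (hSh a)).1
  have frmul : ∀ (w : G) (a : ℤ), fr (w * h ^ a) = fr w := by
    intro w a; rw [hfr, frh, add_zero]
  have fimul : ∀ (w : G) (a : ℤ), fi (w * h ^ a) = fi w := by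
    intro w a; rw [hfi, if_pos (frh a), fih, add_zero]
  have key : ∀ a b : ℤ, 1 - m ≤ a → a ≤ m → 1 - m ≤ b → b ≤ m →
      ((a : ZMod (2*m)) = (b : ZMod (2*m))) → a = b := by
    intro a b h1 h2 h3 h4 hab
    have h5 : ((a - b : ℤ) : ZMod (2*m)) = 0 := by push_cast [hab]; ring
    have h6 : ((2*m : ℕ) : ℤ) ∣ (a - b) := (ZMod.intCast_zmod_eq_zero_iff_dvd _ _).mp h5
    have h7 : (a - b) = 0 := Int.eq_zero_of_dvd_of_natAbs_lt_natAbs h6 (by omega)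
    omega
  have iieq : ∀ (w : G) (n : ℤ), 1 - m ≤ n → n ≤ m → ((n : ZMod (2*m)) = fi w) → ii w = n := by
    intro w n h1 h2 h3
    obtain ⟨ha, hb⟩ := hiiM w
    exact key _ _ ha hb h1 h2 (by rw [hii w, ← h3])
  have cast_sub : ∀ n s : ℤ, ((n - 2*(m:ℤ)*s : ℤ) : ZMod (2*m)) = ((n : ℤ) : ZMod (2*m)) := by
    intro n s
    have c0 : ((2*(m:ℤ)*s : ℤ) : ZMod (2*m)) = 0 := by
      have e : (2*(m:ℤ)*s : ℤ) = ((2*m : ℕ) : ℤ) * s := by push_cast; ring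
      rw [e, Int.cast_mul, Int.cast_natCast, ZMod.natCast_self, zero_mul]
    rw [Int.cast_sub, c0, sub_zero]
  have sgn0 : ∀ n : ℤ, 1 - m ≤ n → n ≤ m → sgnM m n = 0 := by
    intro n h1 h2; unfold sgnM; split_ifs <;> omega
  have ii1 : ii 1 = 0 := iieq 1 0 (by omega) (by omega) (by simp [hfi1])
  have comm0 : ∀ (a : ℤ) (x : G), fr x = 0 → h ^ a * x = x * h ^ a := by
    intro a x hx; exact (Commute.zpow_left (hhZ0 x hx) a).eq
  have comm1 : ∀ (a : ℤ) (x : G), fr x ≠ 0 → h ^ a * x = x * h ^ (-a) := by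
    intro a x hx
    have e1 : SemiconjBy x h⁻¹ h := by
      have h2 : h * x = x * h⁻¹ := by rw [eq_mul_inv_iff_mul_eq]; exact hhG1 x hx
      exact h2.symm
    have e2 := (e1.zpow_right a).eq.symm
    rw [e2, inv_zpow, ← zpow_neg]
  have move0 : ∀ (u z : G) (a b : ℤ), fr z = 0 →
      u * h ^ a * z * h ^ b = (u * z) * h ^ (a + b) := by
    intro u z a b hz
    rw [mul_assoc u (h^a) z, comm0 a z hz]; group
  have move1 : ∀ (u z : G) (a b : ℤ), fr z ≠ 0 →
      u * h ^ a * z * h ^ b = (u * z) * h ^ (b - a) := by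
    intro u z a b hz
    rw [mul_assoc u (h^a) z, comm1 a z hz]; group
  have moveR : ∀ (x w : G) (c d : ℤ), x * (w * h ^ c) * h ^ d = (x * w) * h ^ (c + d) := by
    intro x w c d; group
  refine ⟨?_, ?_, ?_⟩
  · -- identity
    intro x
    obtain ⟨hxl, hxu⟩ := hiiM x
    constructor
    · by_cases hx : fr x = 0
      · show (if fr x = 0 then _ else _) = x
        rw [if_pos hx, ii1, one_mul, zero_add, sgn0 _ hxl hxu]
        simp
      · show (if fr x = 0 then _ else _) = x
        rw [if_neg hx, ii1, one_mul, sgn0 _ (by omega) (by omega)]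
        simp
    · show (if fr 1 = 0 then _ else _) = x
      rw [if_pos hfr1, ii1, add_zero, sgn0 _ hxl hxu]
      simp
  · -- inverses
    intro x
    obtain ⟨hxl, hxu⟩ := hiiM x
    have hfrinv : fr x⁻¹ = -fr x := by
      have h1 := hfr x x⁻¹; rw [mul_inv_cancel, hfr1] at h1
      linear_combination -h1
    by_cases hx : fr x = 0
    · have hfrxi : fr x⁻¹ = 0 := by rw [hfrinv, hx, neg_zero]
      refine ⟨x⁻¹ * h ^ (-(sgnM m (ii x + ii x⁻¹))), ?_, ?_⟩
      · show (if fr (x⁻¹ * h ^ _) = 0 then _ else _) = 1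
        rw [if_pos (by rw [frmul, hfrxi])]
        rw [iieq (x⁻¹ * h ^ (-(sgnM m (ii x + ii x⁻¹)))) (ii x⁻¹) (hiiM x⁻¹).1 (hiiM x⁻¹).2
          (by rw [fimul]; exact hii x⁻¹)]
        group
      · show (if fr x = 0 then _ else _) = 1
        rw [if_pos hx]
        rw [iieq (x⁻¹ * h ^ (-(sgnM m (ii x + ii x⁻¹)))) (ii x⁻¹) (hiiM x⁻¹).1 (hiiM x⁻¹).2
          (by rw [fimul]; exact hii x⁻¹), add_comm (ii x⁻¹) (ii x)]
        rw [mul_assoc x⁻¹ (h ^ _) x, comm0 _ x hx]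
        group
    · have hfrxi : fr x⁻¹ ≠ 0 := by
        rw [hfrinv]; simpa using hx
      have hfixi : fi x⁻¹ = fi x := by
        have h1 := hfi x x⁻¹; rw [mul_inv_cancel, hfi1, if_neg hfrxi] at h1
        linear_combination -h1
      have hiixi : ii x⁻¹ = ii x := iieq x⁻¹ (ii x) hxl hxu (by rw [hfixi]; exact hii x)
      refine ⟨x⁻¹, ?_, ?_⟩
      · show (if fr x⁻¹ = 0 then _ else _) = 1
        rw [if_neg hfrxi, hiixi, sgn0 (ii x + (1 - ii x)) (by omega) (by omega)]
        simp
      · show (if fr x = 0 then _ else _) = 1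
        rw [if_neg hx, hiixi, sgn0 (ii x + (1 - ii x)) (by omega) (by omega)]
        simp
  · -- associativity
    intro x y z
    obtain ⟨hxl, hxu⟩ := hiiM x
    obtain ⟨hyl, hyu⟩ := hiiM y
    obtain ⟨hzl, hzu⟩ := hiiM z
    by_cases hy : fr y = 0 <;> by_cases hz : fr z = 0
    · -- (0,0)
      have e1 : dmul m fr ii h x y = x * y * h ^ (sgnM m (ii x + ii y)) := by
        unfold dmul; rw [if_pos hy]
      have e2 : dmul m fr ii h y z = y * z * h ^ (sgnM m (ii y + ii z)) := by
        unfold dmul; rw [if_pos hz]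
      have hA : ii (x * y * h ^ (sgnM m (ii x + ii y))) =
          ii x + ii y - 2*(m:ℤ)*sgnM m (ii x + ii y) := by
        apply iieq
        · unfold sgnM; split_ifs <;> omega
        · unfold sgnM; split_ifs <;> omega
        · rw [cast_sub, fimul, hfi x y, if_pos hy]; push_cast; rw [hii x, hii y]
      have hC : ii (y * z * h ^ (sgnM m (ii y + ii z))) =
          ii y + ii z - 2*(m:ℤ)*sgnM m (ii y + ii z) := by
        apply iieq
        · unfold sgnM; split_ifs <;> omega
        · unfold sgnM; split_ifs <;> omega
        · rw [cast_sub, fimul, hfi y z, if_pos hz]; push_cast; rw [hii y, hii z]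
      have hfryz : fr (y * z * h ^ (sgnM m (ii y + ii z))) = 0 := by
        rw [frmul, hfr, hy, hz, add_zero]
      rw [e1, e2]
      unfold dmul
      rw [if_pos hz, if_pos hfryz, hA, hC]
      rw [move0 (x*y) z _ _ hz, moveR, ← mul_assoc x y z]
      congr 1
      congr 1
      exact dih00 m (ii x) (ii y) (ii z) hmz hxl hxu hyl hyu hzl hzu
    · -- (0,1)
      have e1 : dmul m fr ii h x y = x * y * h ^ (sgnM m (ii x + ii y)) := by
        unfold dmul; rw [if_pos hy]
      have e2 : dmul m fr ii h y z = y * z * h ^ (-sgnM m (ii y + (1 - ii z))) := by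
        unfold dmul; rw [if_neg hz]
      have hA : ii (x * y * h ^ (sgnM m (ii x + ii y))) =
          ii x + ii y - 2*(m:ℤ)*sgnM m (ii x + ii y) := by
        apply iieq
        · unfold sgnM; split_ifs <;> omega
        · unfold sgnM; split_ifs <;> omega
        · rw [cast_sub, fimul, hfi x y, if_pos hy]; push_cast; rw [hii x, hii y]
      have hC : ii (y * z * h ^ (-sgnM m (ii y + (1 - ii z)))) =
          ii z - ii y - 2*(m:ℤ)*sgnM m (ii z - ii y) := by
        apply iieq
        · unfold sgnM; split_ifs <;> omega
        · unfold sgnM; split_ifs <;> omega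
        · rw [cast_sub, fimul, hfi y z, if_neg hz]; push_cast
          rw [hii y, hii z]; ring
      have hfryz : fr (y * z * h ^ (-sgnM m (ii y + (1 - ii z)))) ≠ 0 := by
        rw [frmul, hfr, hy, zero_add]; exact hz
      rw [e1, e2]
      unfold dmul
      rw [if_neg hz, if_neg hfryz, hA, hC]
      rw [move1 (x*y) z _ _ hz, moveR, ← mul_assoc x y z]
      congr 1
      congr 1
      exact dih01 m (ii x) (ii y) (ii z) hmz hxl hxu hyl hyu hzl hzu
    · -- (1,0)
      have e1 : dmul m fr ii h x y = x * y * h ^ (-sgnM m (ii x + (1 - ii y))) := by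
        unfold dmul; rw [if_neg hy]
      have e2 : dmul m fr ii h y z = y * z * h ^ (sgnM m (ii y + ii z)) := by
        unfold dmul; rw [if_pos hz]
      have hA : ii (x * y * h ^ (-sgnM m (ii x + (1 - ii y)))) =
          ii y - ii x - 2*(m:ℤ)*sgnM m (ii y - ii x) := by
        apply iieq
        · unfold sgnM; split_ifs <;> omega
        · unfold sgnM; split_ifs <;> omega
        · rw [cast_sub, fimul, hfi x y, if_neg hy]; push_cast
          rw [hii x, hii y]; ring
      have hC : ii (y * z * h ^ (sgnM m (ii y + ii z))) =
          ii y + ii z - 2*(m:ℤ)*sgnM m (ii y + ii z) := by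
        apply iieq
        · unfold sgnM; split_ifs <;> omega
        · unfold sgnM; split_ifs <;> omega
        · rw [cast_sub, fimul, hfi y z, if_pos hz]; push_cast; rw [hii y, hii z]
      have hfryz : fr (y * z * h ^ (sgnM m (ii y + ii z))) ≠ 0 := by
        rw [frmul, hfr, hz, add_zero]; exact hy
      rw [e1, e2]
      unfold dmul
      rw [if_pos hz, if_neg hfryz, hA, hC]
      rw [move0 (x*y) z _ _ hz, moveR, ← mul_assoc x y z]
      congr 1
      congr 1
      exact dih10 m (ii x) (ii y) (ii z) hmz hxl hxu hyl hyu hzl hzu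
    · -- (1,1)
      have z2 : ∀ u : ZMod 2, u ≠ 0 → u = 1 := by decide
      have e1 : dmul m fr ii h x y = x * y * h ^ (-sgnM m (ii x + (1 - ii y))) := by
        unfold dmul; rw [if_neg hy]
      have e2 : dmul m fr ii h y z = y * z * h ^ (-sgnM m (ii y + (1 - ii z))) := by
        unfold dmul; rw [if_neg hz]
      have hA : ii (x * y * h ^ (-sgnM m (ii x + (1 - ii y)))) =
          ii y - ii x - 2*(m:ℤ)*sgnM m (ii y - ii x) := by
        apply iieq
        · unfold sgnM; split_ifs <;> omega
        · unfold sgnM; split_ifs <;> omega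
        · rw [cast_sub, fimul, hfi x y, if_neg hy]; push_cast
          rw [hii x, hii y]; ring
      have hC : ii (y * z * h ^ (-sgnM m (ii y + (1 - ii z)))) =
          ii z - ii y - 2*(m:ℤ)*sgnM m (ii z - ii y) := by
        apply iieq
        · unfold sgnM; split_ifs <;> omega
        · unfold sgnM; split_ifs <;> omega
        · rw [cast_sub, fimul, hfi y z, if_neg hz]; push_cast
          rw [hii y, hii z]; ring
      have hfryz : fr (y * z * h ^ (-sgnM m (ii y + (1 - ii z)))) = 0 := by
        rw [frmul, hfr, z2 _ hy, z2 _ hz]; decide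
      rw [e1, e2]
      unfold dmul
      rw [if_neg hz, if_pos hfryz, hA, hC]
      rw [move1 (x*y) z _ _ hz, moveR, ← mul_assoc x y z]
      congr 1
      congr 1
      exact dih11 m (ii x) (ii y) (ii z) hmz hxl hxu hyl hyu hzl hzu
end

section
/- Let Q be a Moufang loop, A an abelian group with Q-action φ, and (φ,η) a factor set. The extension E=(Q,A,φ,η) is a Moufang loop if and only if η(x,y)^{φ(xz)} + η(xy,x)^{φ(z)} + η((xy)x, z) = η(x,z) + η(y,xz) + η(x, y(xz)) for all x,y,z∈Q. -/
/-- A Moufang loop: a loop (with two-sided inverses satisfying the inverse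
properties, which hold in any Moufang loop) satisfying the Moufang identity
((xy)x)z = x(y(xz)). -/
class MufLoop (Q : Type*) extends Mul Q, One Q, Inv Q where
  one_mul : ∀ x : Q, 1 * x = x
  mul_one : ∀ x : Q, x * 1 = x
  inv_mul_cancel_left : ∀ x y : Q, x⁻¹ * (x * y) = y
  mul_inv_cancel_left : ∀ x y : Q, x * (x⁻¹ * y) = y
  mul_inv_cancel_right : ∀ x y : Q, (x * y) * y⁻¹ = x
  inv_mul_cancel_right : ∀ x y : Q, (x * y⁻¹) * y = x
  moufang : ∀ x y z : Q, ((x * y) * x) * z = x * (y * (x * z))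

/-- The extension multiplication on Q × A determined by the action φ and the
map η: (x,a)(y,b) = (xy, a^{φ(y)} + b + η(x,y)). -/
def emul {Q A : Type*} [MufLoop Q] [AddCommGroup A]
    (φ : Q → A ≃+ A) (η : Q → Q → A) (p q : Q × A) : Q × A :=
  (p.1 * q.1, φ q.1 p.2 + q.2 + η p.1 q.1)

/-- The extension E = (Q,A,φ,η) of the abelian group A by the Moufang loop Q via a
normalized factor set (φ,η) is a Moufang loop (i.e. its multiplication satisfies
the Moufang identity) if and only if η satisfies the Moufang-cocycle identity. -/
theorem stmt6 {Q A : Type*} [MufLoop Q] [AddCommGroup A]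
    (φ : Q → A ≃+ A)
    (hφ1 : ∀ a : A, φ 1 a = a)
    (hφmul : ∀ (x y : Q) (a : A), φ (x * y) a = φ y (φ x a))
    (η : Q → Q → A) (hη : ∀ x : Q, η x 1 = 0 ∧ η 1 x = 0) :
    (∀ p q r : Q × A,
      emul φ η (emul φ η (emul φ η p q) p) r = emul φ η p (emul φ η q (emul φ η p r)))
    ↔
    (∀ x y z : Q,
      φ (x * z) (η x y) + φ z (η (x * y) x) + η ((x * y) * x) z
        = η x z + η y (x * z) + η x (y * (x * z))) := by
  constructor
  · intro h x y z
    have h0 := congrArg Prod.snd (h (x, 0) (y, 0) (z, 0))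
    simp only [emul, map_add, map_zero, zero_add, add_zero, hφmul] at h0
    rw [hφmul]
    rw [← sub_eq_zero] at h0 ⊢
    abel_nf at h0 ⊢
    exact h0
  · rintro h ⟨x, a⟩ ⟨y, b⟩ ⟨z, c⟩
    have h1 := h x y z
    refine Prod.ext (MufLoop.moufang x y z) ?_
    simp only [emul, map_add, hφmul]
    rw [hφmul] at h1
    rw [← sub_eq_zero] at h1 ⊢
    abel_nf at h1 ⊢
    exact h1
end

section
/- Let (φ,η) be a Moufang factor set and (φ,μ) an associative factor set on a Moufang loop Q with values in an abelian group A. Then the associators of (Q,A,φ,η) and (Q,A,φ,η+μ) coincide if and only if μ((x(yz))⁻¹, (xy)z) = μ(x(yz), (x(yz))⁻¹)^{φ((xy)z)} for all x,y,z∈Q, which holds if and only if μ(x(yz), [x,y,z]) = 0 for all x,y,z∈Q, where [x,y,z] is the associator in Q. In particular, the associators coincide whenever Q is a group. -/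
/-- The associator of x,y,z in a Moufang loop: the unique w with (xy)z = (x(yz))w. -/
def massoc {Q : Type*} [MufLoop Q] (x y z : Q) : Q :=
  (x * (y * z))⁻¹ * ((x * y) * z)

/-- "The associators of (Q,A,φ,η) and (Q,A,φ,η+μ) coincide": for all p,q,r and w,
w is the associator of p,q,r in the first extension iff it is the associator of
p,q,r in the second extension. -/
def AssociatorsCoincide {Q A : Type*} [MufLoop Q] [AddCommGroup A]
    (φ : Q → A ≃+ A) (η μ : Q → Q → A) : Prop :=
  ∀ p q r w : Q × A,
    emul φ η (emul φ η p q) r = emul φ η (emul φ η p (emul φ η q r)) w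
    ↔
    emul φ (fun x y => η x y + μ x y) (emul φ (fun x y => η x y + μ x y) p q) r
      = emul φ (fun x y => η x y + μ x y)
          (emul φ (fun x y => η x y + μ x y) p
            (emul φ (fun x y => η x y + μ x y) q r)) w

namespace MufAux

variable {Q A : Type*} [MufLoop Q] [AddCommGroup A]

theorem mul_inv_self (a : Q) : a * a⁻¹ = 1 := by
  have := MufLoop.mul_inv_cancel_right (1:Q) a
  rwa [MufLoop.one_mul] at this

theorem inv_mul_self (a : Q) : a⁻¹ * a = 1 := by
  have := MufLoop.inv_mul_cancel_left a (1:Q)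
  rwa [MufLoop.mul_one] at this

theorem mul_massoc (x y z : Q) : (x * (y * z)) * massoc x y z = (x * y) * z :=
  MufLoop.mul_inv_cancel_left _ _

theorem phi_massoc (φ : Q → A ≃+ A)
    (hφmul : ∀ (x y : Q) (a : A), φ (x * y) a = φ y (φ x a))
    (x y z : Q) (b : A) : φ (massoc x y z) b = b := by
  have key : ∀ a : A, φ (massoc x y z) (φ (x * (y * z)) a) = φ (x * (y * z)) a := by
    intro a
    have h1 : φ ((x * (y * z)) * massoc x y z) a = φ (massoc x y z) (φ (x * (y * z)) a) :=
      hφmul _ _ _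
    rw [mul_massoc] at h1
    rw [← h1, hφmul, hφmul, hφmul, hφmul]
  have := key ((φ (x * (y * z))).symm b)
  simpa using this

theorem solve (φ : Q → A ≃+ A) (η' : Q → Q → A) (p q r w : Q × A) :
    emul φ η' (emul φ η' p q) r = emul φ η' (emul φ η' p (emul φ η' q r)) w ↔
    w = (massoc p.1 q.1 r.1,
      (φ r.1 (φ q.1 p.2 + q.2 + η' p.1 q.1) + r.2 + η' (p.1 * q.1) r.1)
      - φ (massoc p.1 q.1 r.1)
          (φ (q.1 * r.1) p.2 + (φ r.1 q.2 + r.2 + η' q.1 r.1) + η' p.1 (q.1 * r.1))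
      - η' (p.1 * (q.1 * r.1)) (massoc p.1 q.1 r.1)) := by
  simp only [emul, Prod.ext_iff]
  constructor
  · rintro ⟨h1, h2⟩
    have hw1 : w.1 = massoc p.1 q.1 r.1 := by
      have := congrArg (fun t => (p.1 * (q.1 * r.1))⁻¹ * t) h1
      simpa [MufLoop.inv_mul_cancel_left, massoc] using this.symm
    rw [hw1] at h2
    refine ⟨hw1, ?_⟩
    rw [h2]
    abel
  · rintro ⟨hw1, hw2⟩
    refine ⟨?_, ?_⟩
    · rw [hw1]; exact (mul_massoc _ _ _).symm
    · rw [hw1, hw2]; abel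

theorem solve2 (φ : Q → A ≃+ A)
    (hφmul : ∀ (x y : Q) (a : A), φ (x * y) a = φ y (φ x a))
    (η μ : Q → Q → A)
    (hμassoc : ∀ x y z : Q, φ z (μ x y) + μ (x * y) z = μ y z + μ x (y * z))
    (p q r w : Q × A) :
    emul φ (fun a b => η a b + μ a b) (emul φ (fun a b => η a b + μ a b) p q) r
      = emul φ (fun a b => η a b + μ a b)
          (emul φ (fun a b => η a b + μ a b) p (emul φ (fun a b => η a b + μ a b) q r)) w ↔
    w = (massoc p.1 q.1 r.1,
      ((φ r.1 (φ q.1 p.2 + q.2 + η p.1 q.1) + r.2 + η (p.1 * q.1) r.1)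
      - φ (massoc p.1 q.1 r.1)
          (φ (q.1 * r.1) p.2 + (φ r.1 q.2 + r.2 + η q.1 r.1) + η p.1 (q.1 * r.1))
      - η (p.1 * (q.1 * r.1)) (massoc p.1 q.1 r.1))
      - μ (p.1 * (q.1 * r.1)) (massoc p.1 q.1 r.1)) := by
  rw [solve]
  have hpair :
      ((massoc p.1 q.1 r.1,
      (φ r.1 (φ q.1 p.2 + q.2 + (η p.1 q.1 + μ p.1 q.1)) + r.2
          + (η (p.1 * q.1) r.1 + μ (p.1 * q.1) r.1))
      - φ (massoc p.1 q.1 r.1)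
          (φ (q.1 * r.1) p.2 + (φ r.1 q.2 + r.2 + (η q.1 r.1 + μ q.1 r.1))
            + (η p.1 (q.1 * r.1) + μ p.1 (q.1 * r.1)))
      - (η (p.1 * (q.1 * r.1)) (massoc p.1 q.1 r.1)
          + μ (p.1 * (q.1 * r.1)) (massoc p.1 q.1 r.1))) : Q × A)
      = (massoc p.1 q.1 r.1,
      ((φ r.1 (φ q.1 p.2 + q.2 + η p.1 q.1) + r.2 + η (p.1 * q.1) r.1)
      - φ (massoc p.1 q.1 r.1)
          (φ (q.1 * r.1) p.2 + (φ r.1 q.2 + r.2 + η q.1 r.1) + η p.1 (q.1 * r.1))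
      - η (p.1 * (q.1 * r.1)) (massoc p.1 q.1 r.1))
      - μ (p.1 * (q.1 * r.1)) (massoc p.1 q.1 r.1)) := by
    refine Prod.ext rfl ?_
    have hA : μ p.1 (q.1 * r.1)
        = φ r.1 (μ p.1 q.1) + μ (p.1 * q.1) r.1 - μ q.1 r.1 := by
      rw [hμassoc]; abel
    simp only [phi_massoc φ hφmul, map_add]
    rw [hA]
    abel
  rw [hpair]

theorem coincide_iff (φ : Q → A ≃+ A)
    (hφmul : ∀ (x y : Q) (a : A), φ (x * y) a = φ y (φ x a))
    (η μ : Q → Q → A)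
    (hμassoc : ∀ x y z : Q, φ z (μ x y) + μ (x * y) z = μ y z + μ x (y * z)) :
    AssociatorsCoincide φ η μ ↔ ∀ x y z : Q, μ (x * (y * z)) (massoc x y z) = 0 := by
  constructor
  · intro h x y z
    have e1 := (solve φ η (x, (0:A)) (y, 0) (z, 0) _).mpr rfl
    have e2 := (h _ _ _ _).mp e1
    have e3 := (solve2 φ hφmul η μ hμassoc (x, (0:A)) (y, 0) (z, 0) _).mp e2
    simp only [Prod.mk.injEq] at e3
    have e4 := e3.2
    rw [eq_sub_iff_add_eq] at e4
    exact add_eq_left.mp e4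
  · intro h p q r w
    rw [solve, solve2 φ hφmul η μ hμassoc, h p.1 q.1 r.1, sub_zero]

end MufAux

/-- Let (φ,η) be a Moufang factor set and (φ,μ) an associative factor set on the
Moufang loop Q with values in the abelian group A.  The associators of
(Q,A,φ,η) and (Q,A,φ,η+μ) coincide iff
μ((x(yz))⁻¹, (xy)z) = μ(x(yz), (x(yz))⁻¹)^{φ((xy)z)} for all x,y,z, which holds
iff μ(x(yz), [x,y,z]) = 0 for all x,y,z.  In particular the associators coincide
when Q is a group. -/
theorem stmt9 {Q A : Type*} [MufLoop Q] [AddCommGroup A]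
    (φ : Q → A ≃+ A)
    (hφ1 : ∀ a : A, φ 1 a = a)
    (hφmul : ∀ (x y : Q) (a : A), φ (x * y) a = φ y (φ x a))
    (η : Q → Q → A) (hη : ∀ x : Q, η x 1 = 0 ∧ η 1 x = 0)
    (hmoufang : ∀ x y z : Q,
      φ (x * z) (η x y) + φ z (η (x * y) x) + η ((x * y) * x) z
        = η x z + η y (x * z) + η x (y * (x * z)))
    (μ : Q → Q → A) (hμ : ∀ x : Q, μ x 1 = 0 ∧ μ 1 x = 0)
    (hμassoc : ∀ x y z : Q, φ z (μ x y) + μ (x * y) z = μ y z + μ x (y * z)) :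
    (AssociatorsCoincide φ η μ ↔
      ∀ x y z : Q,
        μ (x * (y * z))⁻¹ ((x * y) * z)
          = φ ((x * y) * z) (μ (x * (y * z)) (x * (y * z))⁻¹)) ∧
    (AssociatorsCoincide φ η μ ↔
      ∀ x y z : Q, μ (x * (y * z)) (massoc x y z) = 0) ∧
    ((∀ x y z : Q, (x * y) * z = x * (y * z)) → AssociatorsCoincide φ η μ) := by
  have hC := MufAux.coincide_iff φ hφmul η μ hμassoc
  have hB : ∀ x y z : Q,
      (μ (x * (y * z))⁻¹ ((x * y) * z)
        = φ ((x * y) * z) (μ (x * (y * z)) (x * (y * z))⁻¹)) ↔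
      μ (x * (y * z)) (massoc x y z) = 0 := by
    intro x y z
    have hA := hμassoc (x * (y * z)) (x * (y * z))⁻¹ ((x * y) * z)
    rw [MufAux.mul_inv_self, (hμ ((x * y) * z)).2, add_zero] at hA
    unfold massoc
    constructor
    · intro h
      rw [hA] at h
      exact left_eq_add.mp h
    · intro h
      rw [hA, h, add_zero]
  refine ⟨?_, hC, ?_⟩
  · exact hC.trans (Iff.symm (forall_congr' fun x => forall_congr' fun y =>
      forall_congr' fun z => hB x y z))
  · intro hg
    refine hC.mpr fun x y z => ?_
    have : massoc x y z = 1 := by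
      unfold massoc; rw [hg x y z, MufAux.inv_mul_self]
    rw [this]
    exact (hμ _).1
end

section
/- Let (G,·) be a Moufang loop, S⊴G with G/S = ⟨α⟩ cyclic of order 2m, and 1≠h∈S∩Z(G). Then the subloop A = ⟨h⟩ is a normal subloop of both (G,·) and (G,*), where x*y = xy·h^{σ(i+j)} for x∈α^i, y∈α^j, and the quotient loops (G,·)/A and (G,*)/A coincide. -/
/-- Natural powers in a Moufang loop. -/
def mnpow {Q : Type*} [MufLoop Q] (a : Q) : ℕ → Q
  | 0 => 1
  | n + 1 => mnpow a n * a

/-- Integer powers in a Moufang loop. -/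
def mzpow {Q : Type*} [MufLoop Q] (a : Q) : ℤ → Q
  | Int.ofNat n => mnpow a n
  | Int.negSucc n => (mnpow a (n + 1))⁻¹

/-- A subset of a magma is a subloop if it contains the unit, is closed under
multiplication, and equations are solvable within it. -/
def IsSubloopM {G : Type*} (mul : G → G → G) (one : G) (A : Set G) : Prop :=
  one ∈ A ∧ (∀ a ∈ A, ∀ b ∈ A, mul a b ∈ A) ∧
    (∀ a ∈ A, ∀ b ∈ A, ∃ c ∈ A, mul a c = b) ∧
    (∀ a ∈ A, ∀ b ∈ A, ∃ c ∈ A, mul c a = b)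

/-- A subloop A is normal if xA = Ax, x(Ay) = (xA)y and x(yA) = (xy)A. -/
def IsNormalSubloopM {G : Type*} (mul : G → G → G) (one : G) (A : Set G) : Prop :=
  IsSubloopM mul one A ∧
  (∀ x : G, (fun a => mul x a) '' A = (fun a => mul a x) '' A) ∧
  (∀ x y : G, (fun b => mul x b) '' ((fun a => mul a y) '' A)
      = (fun b => mul b y) '' ((fun a => mul x a) '' A)) ∧
  (∀ x y : G, (fun b => mul x b) '' ((fun a => mul y a) '' A)
      = (fun a => mul (mul x y) a) '' A)

/-- The subloop generated by a subset. -/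
def genSubloopM {G : Type*} (mul : G → G → G) (one : G) (T : Set G) : Set G :=
  ⋂₀ {A : Set G | IsSubloopM mul one A ∧ T ⊆ A}

/-- The nucleus of a magma: elements associating with all pairs in all positions. -/
def nucSetM {G : Type*} (mul : G → G → G) : Set G :=
  {x | ∀ y z : G, mul x (mul y z) = mul (mul x y) z ∧
        mul y (mul x z) = mul (mul y x) z ∧
        mul y (mul z x) = mul (mul y z) x}

/-- The cyclic construction on a Moufang loop: x * y · h^{σ(ind x + ind y)}. -/
def cmulM (m : ℕ) {G : Type*} [MufLoop G] (ind : G → ℤ) (h : G) (x y : G) : G :=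
  x * y * mzpow h (sgnM m (ind x + ind y))

theorem genSubloopM_subset {G : Type*} {mul : G → G → G} {one : G} {T B : Set G}
    (hB : IsSubloopM mul one B) (hTB : T ⊆ B) : genSubloopM mul one T ⊆ B :=
  Set.sInter_subset_of_mem ⟨hB, hTB⟩

theorem sgnM_eq_zero_of_mem_Icc {m : ℕ} {i : ℤ} (hi : i ∈ Set.Icc (1 - (m : ℤ)) m) :
    sgnM m i = 0 := by
  rw [sgnM, if_neg (not_lt.2 hi.2), if_neg (not_lt.2 hi.1)]

theorem eq_of_intCast_eq_of_mem_Icc {m : ℕ} {i j : ℤ} (hi : i ∈ Set.Icc (1 - (m : ℤ)) m)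
    (hj : j ∈ Set.Icc (1 - (m : ℤ)) m) (hij : (i : ZMod (2 * m)) = j) : i = j := by
  rw [ZMod.intCast_eq_intCast_iff_dvd_sub] at hij
  have := Int.eq_zero_of_abs_lt_dvd hij (by
    rw [abs_lt]; push_cast; constructor <;> linarith [hi.1, hi.2, hj.1, hj.2])
  omega

namespace MufLoop

variable {G : Type*} [MufLoop G]

theorem mul_left_cancel {a b c : G} (h : a * b = a * c) : b = c := by
  rw [← MufLoop.inv_mul_cancel_left a b, h, MufLoop.inv_mul_cancel_left]

theorem mul_right_cancel {a b c : G} (h : b * a = c * a) : b = c := by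
  rw [← MufLoop.mul_inv_cancel_right b a, h, MufLoop.mul_inv_cancel_right]

end MufLoop

namespace IsSubloopM

variable {G : Type*} [MufLoop G] {B : Set G} (hB : IsSubloopM (· * ·) 1 B)
include hB

theorem inv_mul_mem {a b : G} (ha : a ∈ B) (hb : b ∈ B) : a⁻¹ * b ∈ B := by
  obtain ⟨c, hc, hac⟩ := hB.2.2.1 a ha b hb
  rwa [← MufLoop.mul_left_cancel (hac.trans (MufLoop.mul_inv_cancel_left a b).symm)]

theorem mul_inv_mem {a b : G} (ha : a ∈ B) (hb : b ∈ B) : b * a⁻¹ ∈ B := by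
  obtain ⟨c, hc, hca⟩ := hB.2.2.2 a ha b hb
  rwa [← MufLoop.mul_right_cancel (hca.trans (MufLoop.inv_mul_cancel_right b a).symm)]

theorem mzpow_mem {h : G} (hh : h ∈ B) (n : ℤ) : mzpow h n ∈ B := by
  have hmnpow : ∀ n, mnpow h n ∈ B := by
    intro n
    induction n with
    | zero => exact hB.1
    | succ k ih => exact hB.2.1 _ ih _ hh
  cases n with
  | ofNat n => exact hmnpow n
  | negSucc n =>
    have := hB.inv_mul_mem (hmnpow (n + 1)) hB.1
    rwa [MufLoop.mul_one] at this

end IsSubloopM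

namespace MufLoop

variable {G : Type*} [MufLoop G]

theorem isSubloopM_sInter {𝒮 : Set (Set G)} (h𝒮 : ∀ B ∈ 𝒮, IsSubloopM (· * ·) 1 B) :
    IsSubloopM (· * · : G → G → G) 1 (⋂₀ 𝒮) :=
  ⟨fun B hB => (h𝒮 B hB).1,
    fun a ha b hb B hB => (h𝒮 B hB).2.1 a (ha B hB) b (hb B hB),
    fun a ha b hb => ⟨a⁻¹ * b, fun B hB => (h𝒮 B hB).inv_mul_mem (ha B hB) (hb B hB),
      MufLoop.mul_inv_cancel_left a b⟩,
    fun a ha b hb => ⟨b * a⁻¹, fun B hB => (h𝒮 B hB).mul_inv_mem (ha B hB) (hb B hB),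
      MufLoop.inv_mul_cancel_right b a⟩⟩

theorem isSubloopM_genSubloopM (T : Set G) : IsSubloopM (· * · : G → G → G) 1
    (genSubloopM (· * ·) 1 T) :=
  isSubloopM_sInter fun _ hB => hB.1

theorem mzpow_mem_genSubloopM (h : G) (n : ℤ) :
    mzpow h n ∈ genSubloopM (· * · : G → G → G) 1 {h} :=
  fun _ hB => hB.1.mzpow_mem (hB.2 rfl) n

def center (G : Type*) [MufLoop G] : Set G :=
  {a | (∀ y, a * y = y * a) ∧ ∀ y z : G, a * (y * z) = (a * y) * z ∧
    y * (a * z) = (y * a) * z ∧ y * (z * a) = (y * z) * a}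

theorem one_mem_center : (1 : G) ∈ center G :=
  ⟨fun y => by rw [MufLoop.one_mul, MufLoop.mul_one], fun y z =>
    ⟨by rw [MufLoop.one_mul, MufLoop.one_mul], by rw [MufLoop.one_mul, MufLoop.mul_one],
      by rw [MufLoop.mul_one, MufLoop.mul_one]⟩⟩

theorem mul_mem_center {a b : G} (ha : a ∈ center G) (hb : b ∈ center G) :
    a * b ∈ center G := by
  obtain ⟨hac, haa⟩ := ha
  obtain ⟨hbc, hba⟩ := hb
  refine ⟨fun y => ?_, fun y z => ⟨?_, ?_, ?_⟩⟩
  · rw [← (haa b y).1, hbc y, (haa y b).1, hac y, ← (haa y b).2.1]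
  · rw [← (haa b (y * z)).1, (hba y z).1, (haa (b * y) z).1, (haa b y).1]
  · rw [← (haa b z).1, (haa y (b * z)).2.1, (hba (y * a) z).2.1, ← (haa y b).2.1]
  · rw [(haa z b).2.1, (hba y (z * a)).2.2, (haa y z).2.2, (haa (y * z) b).2.1]

theorem inv_mem_center {a : G} (ha : a ∈ center G) : a⁻¹ ∈ center G := by
  obtain ⟨hac, haa⟩ := ha
  refine ⟨fun y => ?_, fun y z => ⟨?_, ?_, ?_⟩⟩
  · apply mul_left_cancel (a := a)
    rw [MufLoop.mul_inv_cancel_left, (haa y a⁻¹).1, hac y, MufLoop.mul_inv_cancel_right]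
  · apply mul_left_cancel (a := a)
    rw [MufLoop.mul_inv_cancel_left, (haa (a⁻¹ * y) z).1, MufLoop.mul_inv_cancel_left]
  · conv_rhs => rw [← MufLoop.mul_inv_cancel_left a z]
    rw [(haa (y * a⁻¹) (a⁻¹ * z)).2.1, MufLoop.inv_mul_cancel_right]
  · apply mul_right_cancel (a := a)
    rw [MufLoop.inv_mul_cancel_right, ← (haa y (z * a⁻¹)).2.2, MufLoop.inv_mul_cancel_right]

theorem isSubloopM_center : IsSubloopM (· * · : G → G → G) 1 (center G) :=
  ⟨one_mem_center, fun _ ha _ hb => mul_mem_center ha hb,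
    fun a ha b hb => ⟨a⁻¹ * b, mul_mem_center (inv_mem_center ha) hb,
      MufLoop.mul_inv_cancel_left a b⟩,
    fun a ha b hb => ⟨b * a⁻¹, mul_mem_center hb (inv_mem_center ha),
      MufLoop.inv_mul_cancel_right b a⟩⟩

theorem isNormalSubloopM_of_subset_center {A : Set G} (hA : IsSubloopM (· * ·) 1 A)
    (hAZ : A ⊆ center G) : IsNormalSubloopM (· * · : G → G → G) 1 A := by
  refine ⟨hA, fun x => ?_, fun x y => ?_, fun x y => ?_⟩
  · exact Set.image_congr fun a ha => ((hAZ ha).1 x).symm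
  · rw [Set.image_image, Set.image_image]
    exact Set.image_congr fun a ha => ((hAZ ha).2 x y).2.1
  · rw [Set.image_image]
    exact Set.image_congr fun a ha => ((hAZ ha).2 x y).2.2

theorem isNormalSubloopM_twist {A : Set G} (hA : IsSubloopM (· * ·) 1 A)
    (hAZ : A ⊆ center G) (k : G → G → G) (hkA : ∀ x y, k x y ∈ A)
    (hk_one : ∀ x, ∀ a ∈ A, k x a = 1 ∧ k a x = 1)
    (hk_mul : ∀ x y, ∀ a ∈ A, k (x * a) y = k x y ∧ k x (y * a) = k x y) :
    IsNormalSubloopM (fun x y => x * y * k x y) 1 A := by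
  have hr : ∀ x, ∀ a ∈ A, x * a * k x a = x * a := fun x a ha => by
    rw [(hk_one x a ha).1, MufLoop.mul_one]
  have hl : ∀ a ∈ A, ∀ x, a * x * k a x = a * x := fun a ha x => by
    rw [(hk_one x a ha).2, MufLoop.mul_one]
  refine ⟨⟨hA.1, fun a ha b hb => ?_, fun a ha b hb => ?_, fun a ha b hb => ?_⟩,
    fun x => ?_, fun x y => ?_, fun x y => ?_⟩
  · beta_reduce
    rw [hr a b hb]
    exact hA.2.1 a ha b hb
  · obtain ⟨c, hc, hac⟩ := hA.2.2.1 a ha b hb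
    exact ⟨c, hc, (hr a c hc).trans hac⟩
  · obtain ⟨c, hc, hca⟩ := hA.2.2.2 a ha b hb
    exact ⟨c, hc, (hl c hc a).trans hca⟩
  · exact Set.image_congr fun a ha => by
      beta_reduce
      rw [hr x a ha, hl a ha x, (hAZ ha).1 x]
  · rw [Set.image_image, Set.image_image]
    refine Set.image_congr fun a ha => ?_
    have hxay : k x (a * y) = k x y := by rw [(hAZ ha).1 y, (hk_mul x y a ha).2]
    beta_reduce
    rw [hl a ha y, hr x a ha, hxay, (hk_mul x y a ha).1, ((hAZ ha).2 x y).2.1]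
  · rw [Set.image_image]
    refine Set.image_congr fun a ha => ?_
    have hK := hAZ (hkA x y)
    beta_reduce
    -- swap the central elements `a` and `k x y`
    rw [hr y a ha, hr _ a ha, (hk_mul x y a ha).2, ((hAZ ha).2 x y).2.2,
      ← (hK.2 (x * y) a).2.2, (hAZ ha).1, (hK.2 (x * y) a).2.1]

end MufLoop

theorem stmt10_general (m : ℕ) (hm : 0 < m) (G : Type*) [MufLoop G]
    (f : G → ZMod (2 * m)) (hf : ∀ x y : G, f (x * y) = f x + f y)
    (S : Set G) (hSnormal : IsNormalSubloopM (· * · : G → G → G) 1 S)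
    (hSker : ∀ x : G, x ∈ S ↔ f x = 0)
    (ind : G → ℤ)
    (hindM : ∀ x : G, ind x ∈ Set.Icc (1 - (m : ℤ)) (m : ℤ))
    (hind : ∀ x : G, ((ind x : ZMod (2 * m))) = f x)
    (h : G) (hhS : h ∈ S)
    (hhcomm : ∀ y : G, h * y = y * h)
    (hhassoc : ∀ y z : G, h * (y * z) = (h * y) * z ∧
      y * (h * z) = (y * h) * z ∧ y * (z * h) = (y * z) * h) :
    IsNormalSubloopM (· * · : G → G → G) 1 (genSubloopM (· * ·) 1 {h}) ∧
    IsNormalSubloopM (cmulM m ind h) 1 (genSubloopM (· * ·) 1 {h}) ∧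
    (∀ x : G, (fun a => x * a) '' (genSubloopM (· * · : G → G → G) 1 {h})
        = (fun a => cmulM m ind h x a) '' (genSubloopM (· * ·) 1 {h})) ∧
    (∀ x y : G, ∃ a ∈ genSubloopM (· * · : G → G → G) 1 {h},
        cmulM m ind h x y = (x * y) * a) := by
  set A := genSubloopM (· * · : G → G → G) 1 {h}
  have hA : IsSubloopM (· * ·) 1 A := MufLoop.isSubloopM_genSubloopM {h}
  have hAZ : A ⊆ MufLoop.center G :=
    genSubloopM_subset MufLoop.isSubloopM_center (Set.singleton_subset_iff.2 ⟨hhcomm, hhassoc⟩)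
  have hAS : A ⊆ S := genSubloopM_subset hSnormal.1 (Set.singleton_subset_iff.2 hhS)
  have hind_mul : ∀ x, ∀ a ∈ A, ind (x * a) = ind x := fun x a ha =>
    eq_of_intCast_eq_of_mem_Icc (hindM _) (hindM x)
      (by rw [hind, hind, hf, (hSker a).1 (hAS ha), add_zero])
  have hind_eq_zero : ∀ a ∈ A, ind a = 0 := fun a ha =>
    eq_of_intCast_eq_of_mem_Icc (hindM a) (by constructor <;> omega)
      (by rw [hind, (hSker a).1 (hAS ha), Int.cast_zero])
  have hk_one : ∀ x, ∀ a ∈ A, mzpow h (sgnM m (ind x + ind a)) = 1 ∧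
      mzpow h (sgnM m (ind a + ind x)) = 1 := fun x a ha => by
    rw [hind_eq_zero a ha, add_zero, zero_add, sgnM_eq_zero_of_mem_Icc (hindM x)]
    exact ⟨rfl, rfl⟩
  refine ⟨MufLoop.isNormalSubloopM_of_subset_center hA hAZ,
    MufLoop.isNormalSubloopM_twist hA hAZ _ (fun x y => MufLoop.mzpow_mem_genSubloopM h _) hk_one
      (fun x y a ha => by simp only [hind_mul _ a ha, and_self]),
    fun x => Set.image_congr fun a ha => ?_, fun x y => ⟨_, MufLoop.mzpow_mem_genSubloopM h _, rfl⟩⟩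
  show x * a = x * a * _
  rw [(hk_one x a ha).1, MufLoop.mul_one]

/-- Cyclic construction on a Moufang loop (G,·): S ⊴ G with G/S cyclic of order 2m
(encoded by the surjective map f onto ZMod (2m), multiplicative into the additive
group, with S the fibre of 0; ind x ∈ M is the discrete logarithm of the coset of
x, i.e. x ∈ α^{ind x}), and 1 ≠ h ∈ S ∩ Z(G).  Then the subloop A = ⟨h⟩ is normal
in both (G,·) and (G,*), where x*y = xy·h^{σ(ind x + ind y)}, the coset
decompositions modulo A agree, and the quotient loops (G,·)/A and (G,*)/A
coincide. -/
theorem stmt10 (m : ℕ) (hm : 0 < m) (G : Type*) [MufLoop G]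
    (f : G → ZMod (2 * m)) (hf : ∀ x y : G, f (x * y) = f x + f y)
    (hfsurj : Function.Surjective f)
    (S : Set G) (hSnormal : IsNormalSubloopM (· * · : G → G → G) 1 S)
    (hSker : ∀ x : G, x ∈ S ↔ f x = 0)
    (ind : G → ℤ)
    (hindM : ∀ x : G, ind x ∈ Set.Icc (1 - (m : ℤ)) (m : ℤ))
    (hind : ∀ x : G, ((ind x : ZMod (2 * m))) = f x)
    (h : G) (hh1 : h ≠ 1) (hhS : h ∈ S)
    (hhcomm : ∀ y : G, h * y = y * h)
    (hhassoc : ∀ y z : G, h * (y * z) = (h * y) * z ∧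
      y * (h * z) = (y * h) * z ∧ y * (z * h) = (y * z) * h) :
    IsNormalSubloopM (· * · : G → G → G) 1 (genSubloopM (· * ·) 1 {h}) ∧
    IsNormalSubloopM (cmulM m ind h) 1 (genSubloopM (· * ·) 1 {h}) ∧
    (∀ x : G, (fun a => x * a) '' (genSubloopM (· * · : G → G → G) 1 {h})
        = (fun a => cmulM m ind h x a) '' (genSubloopM (· * ·) 1 {h})) ∧
    (∀ x y : G, ∃ a ∈ genSubloopM (· * · : G → G → G) 1 {h},
        cmulM m ind h x y = (x * y) * a) :=
  stmt10_general m hm G f hf S hSnormal hSker ind hindM hind h hhS hhcomm hhassoc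
end

section
/- Let (G,·) be a Moufang loop satisfying the dihedral condition (D) with data (S,β,γ,h), and define x*y = xy·h^{(-1)^r σ(i+j)} as in the dihedral construction. Then (G,*) is a Moufang loop, the associators of (G,·) and (G,*) coincide, A(G,·)=A(G,*) as loops, and N(G,·)=N(G,*) as sets. -/
/-- The dihedral construction on a Moufang loop: x * y · h^{(-1)^r σ(i+j)},
where x lies in the coset β^{fr x} α^{ii x} of S, so that the "left index" of x
(i.e. x ∈ α^i ∪ eα^i) is i = ii x, the "right index" of y (i.e.
y ∈ α^j ∪ α^j f, using α^j γ = β α^{1-j}) is j = ii y if fr y = 0 and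
j = 1 - ii y if fr y = 1, and r = fr y records whether y ∈ G₀ or G₁. -/
def dmulM (m : ℕ) {G : Type*} [MufLoop G] (fr : G → ZMod 2) (ii : G → ℤ) (h : G)
    (x y : G) : G :=
  if fr y = 0 then x * y * mzpow h (sgnM m (ii x + ii y))
  else x * y * mzpow h (-sgnM m (ii x + (1 - ii y)))

/-!
Write `i(x) ∈ M` for the index of `x`, `ε(y) = ±1` according as `y ∈ G₀` or `y ∈ G₁`, and
`c(x, y) = σ(ε(y) i(x) + i(y))`, so that `x * y = xy · h^{c(x,y)}` and
`i(xy) + 2m c(x, y) = ε(y) i(x) + i(y)` in `ℤ`. Since `h` is nuclear, central in `G₀` and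
inverted by `G₁`, pairs `(u, a)` standing for `u h^a` multiply as
`(u, a)(v, b) = (uv, ε(v) a + b + c(u, v))`, and the weight `i(u) + 2m a` of a pair then
transforms as in the semidirect product `G ⋉ ℤ`: the weight of `(u, a)(v, b)` is
`ε(v)·weight(u, a) + weight(v, b)`. So two `*`-words agree once the corresponding `·`-words
agree and their weights, computed from `i` and `ε` alone, agree. This transfers the Moufang
identity from `(G,·)` to `(G,*)`. In an associator equation the two weights differ by `i(w)`,
a multiple of `2m` lying in `M`, hence `0`; so associators lie in `S`, on which `*` and `·`
coincide.
-/

namespace MufLoop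

variable {G : Type*} [MufLoop G]

lemma inv_mul_cancel (x : G) : x⁻¹ * x = 1 := by
  simpa only [MufLoop.mul_one] using MufLoop.inv_mul_cancel_left x 1

lemma mul_left_cancel_iff {a x y : G} : a * x = a * y ↔ x = y :=
  ⟨fun h => by rw [← MufLoop.inv_mul_cancel_left a x, h, MufLoop.inv_mul_cancel_left],
    congrArg _⟩

lemma mul_right_cancel_iff {a x y : G} : x * a = y * a ↔ x = y :=
  ⟨fun h => by rw [← MufLoop.mul_inv_cancel_right x a, h, MufLoop.mul_inv_cancel_right],
    congrArg (· * a)⟩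

lemma existsUnique_mul_left_eq (a b : G) : ∃! x, a * x = b :=
  ⟨a⁻¹ * b, MufLoop.mul_inv_cancel_left a b, fun x hx => by
    rw [← hx, MufLoop.inv_mul_cancel_left]⟩

lemma existsUnique_mul_right_eq (a b : G) : ∃! y, y * a = b :=
  ⟨b * a⁻¹, MufLoop.inv_mul_cancel_right b a, fun y hy => by
    rw [← hy, MufLoop.mul_inv_cancel_right]⟩

section Nucleus

variable {a b : G}

lemma mul_assoc_of_mem_nuc_left (ha : a ∈ nucSetM (· * · : G → G → G)) (y z : G) :
    a * (y * z) = (a * y) * z := (ha y z).1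

lemma mul_assoc_of_mem_nuc_mid (ha : a ∈ nucSetM (· * · : G → G → G)) (y z : G) :
    y * (a * z) = (y * a) * z := (ha y z).2.1

lemma mul_assoc_of_mem_nuc_right (ha : a ∈ nucSetM (· * · : G → G → G)) (y z : G) :
    y * (z * a) = (y * z) * a := (ha y z).2.2

lemma one_mem_nuc : (1 : G) ∈ nucSetM (· * · : G → G → G) := fun y z => by
  simp only [MufLoop.one_mul, MufLoop.mul_one, and_self]

lemma mul_mem_nuc (ha : a ∈ nucSetM (· * · : G → G → G))
    (hb : b ∈ nucSetM (· * · : G → G → G)) : a * b ∈ nucSetM (· * · : G → G → G) := by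
  intro y z
  refine ⟨?_, ?_, ?_⟩
  · calc (a * b) * (y * z) = a * (b * (y * z)) := (mul_assoc_of_mem_nuc_left ha _ _).symm
      _ = a * ((b * y) * z) := by rw [mul_assoc_of_mem_nuc_left hb]
      _ = (a * (b * y)) * z := mul_assoc_of_mem_nuc_left ha _ _
      _ = ((a * b) * y) * z := by rw [mul_assoc_of_mem_nuc_left ha]
  · calc y * ((a * b) * z) = y * (a * (b * z)) := by rw [mul_assoc_of_mem_nuc_left ha]
      _ = (y * a) * (b * z) := mul_assoc_of_mem_nuc_mid ha _ _
      _ = ((y * a) * b) * z := mul_assoc_of_mem_nuc_mid hb _ _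
      _ = (y * (a * b)) * z := by rw [mul_assoc_of_mem_nuc_mid ha]
  · calc y * (z * (a * b)) = y * ((z * a) * b) := by rw [mul_assoc_of_mem_nuc_right hb]
      _ = (y * (z * a)) * b := mul_assoc_of_mem_nuc_right hb _ _
      _ = ((y * z) * a) * b := by rw [mul_assoc_of_mem_nuc_right ha]
      _ = (y * z) * (a * b) := (mul_assoc_of_mem_nuc_right hb _ _).symm

lemma inv_mem_nuc (ha : a ∈ nucSetM (· * · : G → G → G)) :
    a⁻¹ ∈ nucSetM (· * · : G → G → G) := by
  intro y z
  beta_reduce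
  refine ⟨?_, ?_, ?_⟩
  · rw [← mul_left_cancel_iff (a := a), MufLoop.mul_inv_cancel_left,
      mul_assoc_of_mem_nuc_left ha, MufLoop.mul_inv_cancel_left]
  · conv_rhs => rw [← MufLoop.mul_inv_cancel_left a z]
    rw [mul_assoc_of_mem_nuc_mid ha, MufLoop.inv_mul_cancel_right]
  · rw [← mul_right_cancel_iff (a := a), MufLoop.inv_mul_cancel_right,
      ← mul_assoc_of_mem_nuc_right ha, MufLoop.inv_mul_cancel_right]

end Nucleus

end MufLoop

lemma Int.forall_of_iff_succ {P : ℤ → Prop} (h0 : P 0) (step : ∀ k, P k ↔ P (k + 1)) :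
    ∀ k, P k := by
  intro k
  induction k using Int.induction_on with
  | zero => exact h0
  | succ k ih => exact (step k).1 ih
  | pred k ih => exact (step _).2 (by rwa [sub_add_cancel])

section NuclearPowers

variable {G : Type*} [MufLoop G] {h : G}

lemma mnpow_mem_nuc (hh : h ∈ nucSetM (· * · : G → G → G)) :
    ∀ n : ℕ, mnpow h n ∈ nucSetM (· * · : G → G → G)
  | 0 => MufLoop.one_mem_nuc
  | n + 1 => MufLoop.mul_mem_nuc (mnpow_mem_nuc hh n) hh

lemma mzpow_mem_nuc (hh : h ∈ nucSetM (· * · : G → G → G)) :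
    ∀ k : ℤ, mzpow h k ∈ nucSetM (· * · : G → G → G)
  | Int.ofNat n => mnpow_mem_nuc hh n
  | Int.negSucc n => MufLoop.inv_mem_nuc (mnpow_mem_nuc hh (n + 1))

lemma mnpow_succ_eq_mul (hh : h ∈ nucSetM (· * · : G → G → G)) :
    ∀ n : ℕ, mnpow h (n + 1) = h * mnpow h n
  | 0 => by simp only [mnpow, MufLoop.one_mul, MufLoop.mul_one]
  | n + 1 => by
    show mnpow h (n + 1) * h = h * (mnpow h n * h)
    rw [mnpow_succ_eq_mul hh n, MufLoop.mul_assoc_of_mem_nuc_left hh]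

lemma mzpow_zero : mzpow h 0 = 1 := rfl

lemma mzpow_one : mzpow h 1 = h := MufLoop.one_mul h

lemma mzpow_neg_one : mzpow h (-1) = h⁻¹ := congrArg Inv.inv (MufLoop.one_mul h)

lemma mzpow_add_one (hh : h ∈ nucSetM (· * · : G → G → G)) :
    ∀ k : ℤ, mzpow h (k + 1) = mzpow h k * h
  | Int.ofNat n => rfl
  | Int.negSucc 0 => by
    show 1 = (mnpow h 1)⁻¹ * h
    rw [mnpow, mnpow, MufLoop.one_mul, MufLoop.inv_mul_cancel]
  | Int.negSucc (n + 1) => by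
    show (mnpow h (n + 1))⁻¹ = (mnpow h (n + 2))⁻¹ * h
    rw [← MufLoop.mul_right_cancel_iff (a := mnpow h (n + 1)), MufLoop.inv_mul_cancel,
      ← MufLoop.mul_assoc_of_mem_nuc_mid hh, ← mnpow_succ_eq_mul hh, MufLoop.inv_mul_cancel]

lemma mzpow_add (hh : h ∈ nucSetM (· * · : G → G → G)) (a b : ℤ) :
    mzpow h a * mzpow h b = mzpow h (a + b) := by
  revert b
  refine Int.forall_of_iff_succ (by rw [mzpow_zero, MufLoop.mul_one, add_zero]) fun b => ?_
  rw [mzpow_add_one hh, ← add_assoc, mzpow_add_one hh, MufLoop.mul_assoc_of_mem_nuc_right hh,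
    MufLoop.mul_right_cancel_iff]

lemma mul_mzpow_neg_mul_mzpow (hh : h ∈ nucSetM (· * · : G → G → G)) (x : G) (k : ℤ) :
    (x * mzpow h (-k)) * mzpow h k = x := by
  rw [← MufLoop.mul_assoc_of_mem_nuc_right (mzpow_mem_nuc hh k), mzpow_add hh, neg_add_cancel,
    mzpow_zero, MufLoop.mul_one]

lemma mzpow_mul_comm (hh : h ∈ nucSetM (· * · : G → G → G)) {y : G} {e : ℤ}
    (hy : h * y = y * mzpow h e) (k : ℤ) : mzpow h k * y = y * mzpow h (e * k) := by
  revert k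
  refine Int.forall_of_iff_succ (by rw [mzpow_zero, MufLoop.one_mul, mul_zero, mzpow_zero,
    MufLoop.mul_one]) fun k => ?_
  rw [mzpow_add_one hh, ← MufLoop.mul_assoc_of_mem_nuc_mid hh, hy,
    MufLoop.mul_assoc_of_mem_nuc_right (mzpow_mem_nuc hh e), mul_add_one, ← mzpow_add hh,
    MufLoop.mul_assoc_of_mem_nuc_right (mzpow_mem_nuc hh e), MufLoop.mul_right_cancel_iff]

end NuclearPowers

def signOf (r : ZMod 2) : ℤ := if r = 0 then 1 else -1

lemma signOf_zero : signOf 0 = 1 := rfl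

lemma signOf_of_ne_zero {r : ZMod 2} (hr : r ≠ 0) : signOf r = -1 := if_neg hr

lemma signOf_add (r s : ZMod 2) : signOf (r + s) = signOf r * signOf s := by
  revert r s; decide

lemma intCast_signOf_mul {n : ℕ} (r : ZMod 2) (a : ZMod n) :
    ((signOf r : ℤ) : ZMod n) * a = if r = 0 then a else -a := by
  unfold signOf; split_ifs <;> simp

section Window

variable {m : ℕ}

lemma sgnM_eq_zero {t : ℤ} (ht : t ∈ Set.Icc (1 - (m : ℤ)) m) : sgnM m t = 0 := by
  obtain ⟨h1, h2⟩ := ht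
  unfold sgnM; rw [if_neg (by omega), if_neg (by omega)]

lemma sgnM_one_sub (t : ℤ) : sgnM m (1 - t) = -sgnM m t := by
  unfold sgnM; split_ifs <;> omega

lemma sub_sgnM_mem_Icc {t : ℤ} (ht : t ∈ Set.Icc (1 - 2 * (m : ℤ)) (2 * m)) :
    t - 2 * m * sgnM m t ∈ Set.Icc (1 - (m : ℤ)) m := by
  obtain ⟨h1, h2⟩ := ht
  unfold sgnM; split_ifs <;> constructor <;> omega

lemma zero_mem_Icc_of_pos (hm : 0 < m) : (0 : ℤ) ∈ Set.Icc (1 - (m : ℤ)) m := by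
  constructor <;> omega

lemma eq_zero_of_mem_Icc_of_dvd {v : ℤ} (hv : v ∈ Set.Icc (1 - (m : ℤ)) m)
    (hdvd : 2 * (m : ℤ) ∣ v) : v = 0 := by
  obtain ⟨h1, h2⟩ := hv
  exact Int.eq_zero_of_abs_lt_dvd hdvd (abs_lt.mpr ⟨by omega, by omega⟩)

lemma eq_of_mem_Icc_of_intCast_eq {a b : ℤ} (ha : a ∈ Set.Icc (1 - (m : ℤ)) m)
    (hb : b ∈ Set.Icc (1 - (m : ℤ)) m) (hab : (a : ZMod (2 * m)) = b) : a = b := by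
  obtain ⟨ha1, ha2⟩ := ha
  obtain ⟨hb1, hb2⟩ := hb
  have hdvd : 2 * (m : ℤ) ∣ b - a := by
    exact_mod_cast (ZMod.intCast_eq_intCast_iff_dvd_sub ..).1 hab
  have := Int.eq_zero_of_abs_lt_dvd hdvd (abs_lt.mpr ⟨by omega, by omega⟩)
  omega

end Window

section Subloops

variable {G : Type*} {mul mul' : G → G → G} {one : G} {A K T : Set G}

def associatorSet (mul : G → G → G) : Set G :=
  {w | ∃ x y z, mul (mul x y) z = mul (mul x (mul y z)) w}

lemma IsSubloopM.congr (hA : IsSubloopM mul one A)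
    (heq : ∀ a ∈ A, ∀ b ∈ A, mul a b = mul' a b) : IsSubloopM mul' one A := by
  obtain ⟨h1, hmul, hr, hl⟩ := hA
  refine ⟨h1, fun a ha b hb => heq a ha b hb ▸ hmul a ha b hb, fun a ha b hb => ?_,
    fun a ha b hb => ?_⟩
  · obtain ⟨c, hc, hac⟩ := hr a ha b hb
    exact ⟨c, hc, heq a ha c hc ▸ hac⟩
  · obtain ⟨c, hc, hca⟩ := hl a ha b hb
    exact ⟨c, hc, heq c hc a ha ▸ hca⟩

lemma subset_genSubloopM : T ⊆ genSubloopM mul one T :=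
  fun _ hx => Set.mem_sInter.mpr fun _ hA => hA.2 hx

lemma genSubloopM_subset_s12 (hA : IsSubloopM mul one A) (hT : T ⊆ A) :
    genSubloopM mul one T ⊆ A :=
  fun _ hx => Set.mem_sInter.mp hx A ⟨hA, hT⟩

/-- In every subloop, the solution of `a x = b` is the unique one in the whole magma. -/
lemma isSubloopM_genSubloopM (hR : ∀ a b, ∃! x, mul a x = b) (hL : ∀ a b, ∃! y, mul y a = b) :
    IsSubloopM mul one (genSubloopM mul one T) := by
  have mem (A) (hA : IsSubloopM mul one A ∧ T ⊆ A) {x} (hx : x ∈ genSubloopM mul one T) :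
      x ∈ A := Set.mem_sInter.mp hx A hA
  refine ⟨Set.mem_sInter.mpr fun _ hA => hA.1.1,
    fun a ha b hb => Set.mem_sInter.mpr fun A hA => hA.1.2.1 a (mem A hA ha) b (mem A hA hb),
    fun a ha b hb => ?_, fun a ha b hb => ?_⟩
  · obtain ⟨x, hx, hxu⟩ := hR a b
    refine ⟨x, Set.mem_sInter.mpr fun A hA => ?_, hx⟩
    obtain ⟨c, hcA, hc⟩ := hA.1.2.2.1 a (mem A hA ha) b (mem A hA hb)
    rwa [← hxu c hc]
  · obtain ⟨y, hy, hyu⟩ := hL a b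
    refine ⟨y, Set.mem_sInter.mpr fun A hA => ?_, hy⟩
    obtain ⟨c, hcA, hc⟩ := hA.1.2.2.2 a (mem A hA ha) b (mem A hA hb)
    rwa [← hyu c hc]

lemma genSubloopM_subset_of_eqOn (hK : IsSubloopM mul one K) (hTK : T ⊆ K)
    (hR : ∀ a b, ∃! x, mul a x = b) (hL : ∀ a b, ∃! y, mul y a = b)
    (heq : ∀ a ∈ K, ∀ b ∈ K, mul a b = mul' a b) :
    genSubloopM mul' one T ⊆ genSubloopM mul one T := by
  have hgen := genSubloopM_subset_s12 hK hTK
  exact genSubloopM_subset_s12 ((isSubloopM_genSubloopM hR hL).congr fun a ha b hb =>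
    heq a (hgen ha) b (hgen hb)) subset_genSubloopM

lemma genSubloopM_eq_of_eqOn (hK : IsSubloopM mul one K) (hTK : T ⊆ K)
    (hR : ∀ a b, ∃! x, mul a x = b) (hL : ∀ a b, ∃! y, mul y a = b)
    (hR' : ∀ a b, ∃! x, mul' a x = b) (hL' : ∀ a b, ∃! y, mul' y a = b)
    (heq : ∀ a ∈ K, ∀ b ∈ K, mul a b = mul' a b) :
    genSubloopM mul one T = genSubloopM mul' one T :=
  (genSubloopM_subset_of_eqOn (hK.congr heq) hTK hR' hL' fun a ha b hb =>
    (heq a ha b hb).symm).antisymm (genSubloopM_subset_of_eqOn hK hTK hR hL heq)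

end Subloops

/-- Condition (D): `x` lies in the coset `β^{fr x} α^{fi x}` of `S`, and `ii x ∈ M` represents
`fi x`. -/
structure DihedralData (m : ℕ) (G : Type*) [MufLoop G] where
  fi : G → ZMod (2 * m)
  fr : G → ZMod 2
  ii : G → ℤ
  h : G
  pos : 0 < m
  fr_mul : ∀ x y, fr (x * y) = fr x + fr y
  fi_mul : ∀ x y, fi (x * y) = (if fr y = 0 then fi x else -fi x) + fi y
  ii_mem : ∀ x, ii x ∈ Set.Icc (1 - (m : ℤ)) m
  intCast_ii : ∀ x, (ii x : ZMod (2 * m)) = fi x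
  fr_h : fr h = 0
  fi_h : fi h = 0
  h_mem_nuc : h ∈ nucSetM (· * · : G → G → G)
  h_mul_comm : ∀ y, fr y = 0 → h * y = y * h
  h_mul_mul_h : ∀ y, fr y ≠ 0 → (h * y) * h = y

namespace DihedralData

variable {m : ℕ} {G : Type*} [MufLoop G] (D : DihedralData m G)

abbrev dmul : G → G → G := dmulM m D.fr D.ii D.h

section Cosets

def ker : Set G := {w | D.fr w = 0 ∧ D.fi w = 0}

lemma fr_one : D.fr 1 = 0 := by
  simpa only [MufLoop.mul_one, left_eq_add] using D.fr_mul 1 1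

lemma fi_one : D.fi 1 = 0 := by
  simpa only [MufLoop.mul_one, D.fr_one, if_true, left_eq_add] using D.fi_mul 1 1

lemma ii_congr {x y : G} (hxy : D.fi x = D.fi y) : D.ii x = D.ii y :=
  eq_of_mem_Icc_of_intCast_eq (D.ii_mem x) (D.ii_mem y) (by rw [D.intCast_ii, D.intCast_ii, hxy])

lemma ii_eq_zero_iff {x : G} : D.ii x = 0 ↔ D.fi x = 0 := by
  refine ⟨fun hx => by rw [← D.intCast_ii, hx, Int.cast_zero], fun hx => ?_⟩
  refine eq_of_mem_Icc_of_intCast_eq (D.ii_mem x) (zero_mem_Icc_of_pos D.pos) ?_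
  rw [D.intCast_ii, hx, Int.cast_zero]

lemma ii_one : D.ii 1 = 0 := D.ii_eq_zero_iff.2 D.fi_one

lemma coset_eq_of_mul_left {a x y : G} (hfr : D.fr (a * x) = D.fr (a * y))
    (hfi : D.fi (a * x) = D.fi (a * y)) : D.fr x = D.fr y ∧ D.fi x = D.fi y := by
  rw [D.fr_mul, D.fr_mul, add_right_inj] at hfr
  rw [D.fi_mul, D.fi_mul, hfr, add_right_inj] at hfi
  exact ⟨hfr, hfi⟩

lemma coset_eq_of_mul_right {a x y : G} (hfr : D.fr (x * a) = D.fr (y * a))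
    (hfi : D.fi (x * a) = D.fi (y * a)) : D.fr x = D.fr y ∧ D.fi x = D.fi y := by
  rw [D.fr_mul, D.fr_mul, add_left_inj] at hfr
  rw [D.fi_mul, D.fi_mul, add_left_inj] at hfi
  split_ifs at hfi
  · exact ⟨hfr, hfi⟩
  · exact ⟨hfr, neg_inj.1 hfi⟩

end Cosets

section Powers

lemma mzpow_mem_nuc_h (k : ℤ) : mzpow D.h k ∈ nucSetM (· * · : G → G → G) :=
  mzpow_mem_nuc D.h_mem_nuc k

lemma mzpow_h_mem_ker (k : ℤ) : mzpow D.h k ∈ D.ker := by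
  revert k
  refine Int.forall_of_iff_succ ⟨D.fr_one, D.fi_one⟩ fun k => ?_
  rw [ker, Set.mem_ofPred, Set.mem_ofPred, mzpow_add_one D.h_mem_nuc, D.fr_mul, D.fi_mul,
    D.fr_h, D.fi_h, if_pos rfl, add_zero, add_zero]

lemma fr_mul_mzpow_h (x : G) (k : ℤ) : D.fr (x * mzpow D.h k) = D.fr x := by
  rw [D.fr_mul, (D.mzpow_h_mem_ker k).1, add_zero]

lemma fi_mul_mzpow_h (x : G) (k : ℤ) : D.fi (x * mzpow D.h k) = D.fi x := by
  rw [D.fi_mul, (D.mzpow_h_mem_ker k).1, if_pos rfl, (D.mzpow_h_mem_ker k).2, add_zero]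

lemma ii_mul_mzpow_h (x : G) (k : ℤ) : D.ii (x * mzpow D.h k) = D.ii x :=
  D.ii_congr (D.fi_mul_mzpow_h x k)

lemma h_mul_eq (y : G) : D.h * y = y * mzpow D.h (signOf (D.fr y)) := by
  by_cases hy : D.fr y = 0
  · rw [hy, signOf_zero, mzpow_one, D.h_mul_comm y hy]
  · rw [signOf_of_ne_zero hy, mzpow_neg_one, ← MufLoop.mul_right_cancel_iff (a := D.h),
      D.h_mul_mul_h y hy, MufLoop.inv_mul_cancel_right]

lemma mzpow_h_mul (y : G) (k : ℤ) :
    mzpow D.h k * y = y * mzpow D.h (signOf (D.fr y) * k) :=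
  mzpow_mul_comm D.h_mem_nuc (D.h_mul_eq y) k

lemma mul_mzpow_h_mul_mul_mzpow_h (x y : G) (a b : ℤ) :
    (x * mzpow D.h a) * (y * mzpow D.h b) = (x * y) * mzpow D.h (signOf (D.fr y) * a + b) := by
  rw [MufLoop.mul_assoc_of_mem_nuc_right (D.mzpow_mem_nuc_h b),
    ← MufLoop.mul_assoc_of_mem_nuc_mid (D.mzpow_mem_nuc_h a), D.mzpow_h_mul,
    MufLoop.mul_assoc_of_mem_nuc_right (D.mzpow_mem_nuc_h _),
    ← MufLoop.mul_assoc_of_mem_nuc_right (D.mzpow_mem_nuc_h b), mzpow_add D.h_mem_nuc]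

end Powers

def carry (x y : G) : ℤ := sgnM m (signOf (D.fr y) * D.ii x + D.ii y)

lemma dmul_eq (x y : G) : D.dmul x y = x * y * mzpow D.h (D.carry x y) := by
  unfold dmul dmulM carry
  split_ifs with hy
  · rw [hy, signOf_zero, one_mul]
  · rw [signOf_of_ne_zero hy, show -1 * D.ii x + D.ii y = 1 - (D.ii x + (1 - D.ii y)) by ring,
      sgnM_one_sub]

lemma carry_congr {x x' y y' : G} (hx : D.fi x = D.fi x') (hyr : D.fr y = D.fr y')
    (hyi : D.fi y = D.fi y') : D.carry x y = D.carry x' y' := by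
  rw [carry, carry, D.ii_congr hx, D.ii_congr hyi, hyr]

lemma ii_mul_add_carry (x y : G) :
    D.ii (x * y) + 2 * m * D.carry x y = signOf (D.fr y) * D.ii x + D.ii y := by
  obtain ⟨hx1, hx2⟩ := D.ii_mem x
  obtain ⟨hy1, hy2⟩ := D.ii_mem y
  have hwin : signOf (D.fr y) * D.ii x + D.ii y ∈ Set.Icc (1 - 2 * (m : ℤ)) (2 * m) := by
    unfold signOf; split_ifs <;> constructor <;> omega
  rw [← eq_sub_iff_add_eq]
  refine eq_of_mem_Icc_of_intCast_eq (D.ii_mem _) (sub_sgnM_mem_Icc hwin) ?_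
  have h2m : ((2 * m : ℕ) : ZMod (2 * m)) = 0 := ZMod.natCast_self _
  push_cast at h2m ⊢
  rw [D.intCast_ii, D.intCast_ii, D.intCast_ii, intCast_signOf_mul, h2m, zero_mul, sub_zero,
    D.fi_mul]

section Twisted

/-- `(u, a)` stands for `u h^a`. -/
def tmul (p q : G × ℤ) : G × ℤ :=
  (p.1 * q.1, signOf (D.fr q.1) * p.2 + q.2 + D.carry p.1 q.1)

def eval (p : G × ℤ) : G := p.1 * mzpow D.h p.2

def weight (p : G × ℤ) : ℤ := D.ii p.1 + 2 * m * p.2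

@[simp]
lemma tmul_fst (p q : G × ℤ) : (D.tmul p q).1 = p.1 * q.1 := rfl

@[simp]
lemma eval_mk_zero (x : G) : D.eval (x, 0) = x := MufLoop.mul_one x

@[simp]
lemma weight_mk_zero (x : G) : D.weight (x, 0) = D.ii x := by
  rw [weight, mul_zero, add_zero]

lemma eval_tmul (p q : G × ℤ) : D.eval (D.tmul p q) = D.dmul (D.eval p) (D.eval q) := by
  rw [D.dmul_eq, eval, eval, eval, D.mul_mzpow_h_mul_mul_mzpow_h,
    D.carry_congr (D.fi_mul_mzpow_h _ _) (D.fr_mul_mzpow_h _ _) (D.fi_mul_mzpow_h _ _),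
    ← MufLoop.mul_assoc_of_mem_nuc_right (D.mzpow_mem_nuc_h _), mzpow_add D.h_mem_nuc]
  rfl

lemma weight_tmul (p q : G × ℤ) :
    D.weight (D.tmul p q) = signOf (D.fr q.1) * D.weight p + D.weight q := by
  simp only [weight, tmul]
  linear_combination D.ii_mul_add_carry p.1 q.1

lemma fr_eval (p : G × ℤ) : D.fr (D.eval p) = D.fr p.1 := D.fr_mul_mzpow_h _ _

lemma ii_eval (p : G × ℤ) : D.ii (D.eval p) = D.ii p.1 := D.ii_mul_mzpow_h _ _

lemma eq_of_weight_eq {p q : G × ℤ} (h1 : p.1 = q.1) (hw : D.weight p = D.weight q) : p = q := by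
  have hm : (2 * m : ℤ) ≠ 0 := by have := D.pos; omega
  refine Prod.ext h1 (mul_left_cancel₀ hm ?_)
  simpa only [weight, h1, add_right_inj] using hw

lemma eval_eq_eval_iff {p q : G × ℤ} (h2 : p.2 = q.2) : D.eval p = D.eval q ↔ p.1 = q.1 := by
  rw [eval, eval, h2, MufLoop.mul_right_cancel_iff]

end Twisted

section Loop

lemma dmul_one_left (x : G) : D.dmul 1 x = x := by
  rw [D.dmul_eq, carry, D.ii_one, mul_zero, zero_add, sgnM_eq_zero (D.ii_mem x), mzpow_zero,
    MufLoop.mul_one, MufLoop.one_mul]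

lemma dmul_one_right (x : G) : D.dmul x 1 = x := by
  rw [D.dmul_eq, carry, D.ii_one, D.fr_one, signOf_zero, one_mul, add_zero,
    sgnM_eq_zero (D.ii_mem x), mzpow_zero, MufLoop.mul_one, MufLoop.mul_one]

lemma fr_dmul (x y : G) : D.fr (D.dmul x y) = D.fr (x * y) := by
  rw [D.dmul_eq, D.fr_mul_mzpow_h]

lemma fi_dmul (x y : G) : D.fi (D.dmul x y) = D.fi (x * y) := by
  rw [D.dmul_eq, D.fi_mul_mzpow_h]

lemma dmul_left_injective (a : G) : Function.Injective (D.dmul a) := by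
  intro x y hxy
  obtain ⟨hfr, hfi⟩ := D.coset_eq_of_mul_left (by simpa only [fr_dmul] using congrArg D.fr hxy)
    (by simpa only [fi_dmul] using congrArg D.fi hxy)
  rwa [D.dmul_eq, D.dmul_eq, D.carry_congr rfl hfr hfi, MufLoop.mul_right_cancel_iff,
    MufLoop.mul_left_cancel_iff] at hxy

lemma dmul_right_injective (a : G) : Function.Injective (D.dmul · a) := by
  intro x y hxy
  beta_reduce at hxy
  obtain ⟨-, hfi⟩ := D.coset_eq_of_mul_right (by simpa only [fr_dmul] using congrArg D.fr hxy)
    (by simpa only [fi_dmul] using congrArg D.fi hxy)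
  rwa [D.dmul_eq, D.dmul_eq, D.carry_congr hfi rfl rfl, MufLoop.mul_right_cancel_iff,
    MufLoop.mul_right_cancel_iff] at hxy

/-- The solution is the `·`-solution of `a x = b h^{-c}`, where `c` is the carry of the
`·`-solution of `a x = b`, which lies in the same coset. -/
lemma existsUnique_dmul_left_eq (a b : G) : ∃! x, D.dmul a x = b := by
  refine existsUnique_of_exists_of_unique ?_ fun x y hx hy =>
    D.dmul_left_injective a (hx.trans hy.symm)
  set c := D.carry a (a⁻¹ * b)
  have hx : a * (a⁻¹ * (b * mzpow D.h (-c))) = b * mzpow D.h (-c) :=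
    MufLoop.mul_inv_cancel_left _ _
  obtain ⟨hfr, hfi⟩ := D.coset_eq_of_mul_left (a := a) (x := a⁻¹ * (b * mzpow D.h (-c)))
    (y := a⁻¹ * b) (by rw [hx, MufLoop.mul_inv_cancel_left, D.fr_mul_mzpow_h])
    (by rw [hx, MufLoop.mul_inv_cancel_left, D.fi_mul_mzpow_h])
  exact ⟨_, by rw [D.dmul_eq, D.carry_congr rfl hfr hfi, hx,
    mul_mzpow_neg_mul_mzpow D.h_mem_nuc]⟩

lemma existsUnique_dmul_right_eq (a b : G) : ∃! y, D.dmul y a = b := by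
  refine existsUnique_of_exists_of_unique ?_ fun x y hx hy =>
    D.dmul_right_injective a (hx.trans hy.symm)
  set c := D.carry (b * a⁻¹) a
  have hy : ((b * mzpow D.h (-c)) * a⁻¹) * a = b * mzpow D.h (-c) :=
    MufLoop.inv_mul_cancel_right _ _
  obtain ⟨-, hfi⟩ := D.coset_eq_of_mul_right (a := a) (x := (b * mzpow D.h (-c)) * a⁻¹)
    (y := b * a⁻¹) (by rw [hy, MufLoop.inv_mul_cancel_right, D.fr_mul_mzpow_h])
    (by rw [hy, MufLoop.inv_mul_cancel_right, D.fi_mul_mzpow_h])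
  exact ⟨_, by rw [D.dmul_eq, D.carry_congr hfi rfl rfl, hy,
    mul_mzpow_neg_mul_mzpow D.h_mem_nuc]⟩

theorem dmul_moufang (x y z : G) :
    D.dmul (D.dmul (D.dmul x y) x) z = D.dmul x (D.dmul y (D.dmul x z)) := by
  have key : D.tmul (D.tmul (D.tmul (x, 0) (y, 0)) (x, 0)) (z, 0)
      = D.tmul (x, 0) (D.tmul (y, 0) (D.tmul (x, 0) (z, 0))) := by
    refine D.eq_of_weight_eq (MufLoop.moufang x y z) ?_
    simp only [weight_tmul, tmul_fst, weight_mk_zero, D.fr_mul, signOf_add]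
    ring
  simpa only [eval_tmul, eval_mk_zero] using congrArg D.eval key

end Loop

section Associators

lemma fr_eq_zero_of_fr_associator {x y z w : G}
    (hfr : D.fr ((x * y) * z) = D.fr ((x * (y * z)) * w)) : D.fr w = 0 := by
  simp only [D.fr_mul] at hfr
  linear_combination -hfr

/-- The two bracketings differ in weight by `i(w)`, while their `·`-values have the same index;
so `i(w)` is a multiple of `2m` lying in `M`. -/
lemma ii_eq_zero_and_snd_eq_of_associator {x y z w : G} (hw : D.fr w = 0)
    (hii : D.ii ((x * y) * z) = D.ii ((x * (y * z)) * w)) :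
    D.ii w = 0 ∧ (D.tmul (D.tmul (x, 0) (y, 0)) (z, 0)).2
      = (D.tmul (D.tmul (x, 0) (D.tmul (y, 0) (z, 0))) (w, 0)).2 := by
  set P := D.tmul (D.tmul (x, 0) (y, 0)) (z, 0)
  set Q := D.tmul (D.tmul (x, 0) (D.tmul (y, 0) (z, 0))) (w, 0)
  have hweight : D.weight Q = D.weight P + D.ii w := by
    simp only [P, Q, weight_tmul, tmul_fst, weight_mk_zero, D.fr_mul, signOf_add, hw,
      signOf_zero]
    ring
  have hdiff : D.ii w = 2 * m * (Q.2 - P.2) := by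
    simp only [weight, show P.1 = (x * y) * z from rfl,
      show Q.1 = (x * (y * z)) * w from rfl] at hweight
    linear_combination -hweight - hii
  have hzero := eq_zero_of_mem_Icc_of_dvd (D.ii_mem w) ⟨_, hdiff⟩
  refine ⟨hzero, ?_⟩
  have := (mul_eq_zero.1 (hdiff ▸ hzero)).resolve_left (by have := D.pos; omega)
  linarith

theorem mul_associator_iff (x y z w : G) :
    (x * y) * z = (x * (y * z)) * w ↔
      D.dmul (D.dmul x y) z = D.dmul (D.dmul x (D.dmul y z)) w := by
  set P := D.tmul (D.tmul (x, 0) (y, 0)) (z, 0)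
  set Q := D.tmul (D.tmul (x, 0) (D.tmul (y, 0) (z, 0))) (w, 0)
  have hsnd (hfr : D.fr P.1 = D.fr Q.1) (hii : D.ii P.1 = D.ii Q.1) : P.2 = Q.2 :=
    (D.ii_eq_zero_and_snd_eq_of_associator (D.fr_eq_zero_of_fr_associator hfr) hii).2
  have heval : D.dmul (D.dmul x y) z = D.dmul (D.dmul x (D.dmul y z)) w ↔
      D.eval P = D.eval Q := by
    simp only [P, Q, eval_tmul, eval_mk_zero]
  rw [heval]
  constructor
  · intro h
    exact (D.eval_eq_eval_iff (hsnd (congrArg D.fr h) (congrArg D.ii h))).2 h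
  · intro h
    refine (D.eval_eq_eval_iff (hsnd ?_ ?_)).1 h
    · simpa only [fr_eval] using congrArg D.fr h
    · simpa only [ii_eval] using congrArg D.ii h

lemma mul_assoc_iff_dmul (x y z : G) :
    x * (y * z) = (x * y) * z ↔ D.dmul x (D.dmul y z) = D.dmul (D.dmul x y) z := by
  have h := D.mul_associator_iff x y z 1
  rw [MufLoop.mul_one, D.dmul_one_right] at h
  rw [eq_comm, h, eq_comm]

theorem nucSetM_eq_nucSetM_dmul : nucSetM (· * · : G → G → G) = nucSetM D.dmul :=
  Set.ext fun x => forall₂_congr fun y z => and_congr (D.mul_assoc_iff_dmul x y z)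
    (and_congr (D.mul_assoc_iff_dmul y x z) (D.mul_assoc_iff_dmul y z x))

lemma associatorSet_dmul : associatorSet D.dmul = associatorSet (· * · : G → G → G) :=
  Set.ext fun w => exists₃_congr fun x y z => (D.mul_associator_iff x y z w).symm

end Associators

section Kernel

lemma dmul_eq_mul_of_mem_ker {a b : G} (ha : a ∈ D.ker) (hb : b ∈ D.ker) :
    D.dmul a b = a * b := by
  rw [D.dmul_eq, carry, D.ii_eq_zero_iff.2 ha.2, D.ii_eq_zero_iff.2 hb.2, mul_zero, add_zero,
    sgnM_eq_zero (zero_mem_Icc_of_pos D.pos), mzpow_zero, MufLoop.mul_one]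

lemma isSubloopM_ker : IsSubloopM (· * · : G → G → G) 1 D.ker := by
  refine ⟨⟨D.fr_one, D.fi_one⟩, fun a ha b hb => ⟨?_, ?_⟩,
    fun a ha b hb => ⟨a⁻¹ * b, ?_, MufLoop.mul_inv_cancel_left a b⟩,
    fun a ha b hb => ⟨b * a⁻¹, ?_, MufLoop.inv_mul_cancel_right b a⟩⟩
  · rw [D.fr_mul, ha.1, hb.1, add_zero]
  · rw [D.fi_mul, if_pos hb.1, ha.2, hb.2, add_zero]
  · have := D.coset_eq_of_mul_left (a := a) (x := a⁻¹ * b) (y := 1)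
      (by rw [MufLoop.mul_inv_cancel_left, MufLoop.mul_one, ha.1, hb.1])
      (by rw [MufLoop.mul_inv_cancel_left, MufLoop.mul_one, ha.2, hb.2])
    rwa [D.fr_one, D.fi_one] at this
  · have := D.coset_eq_of_mul_right (a := a) (x := b * a⁻¹) (y := 1)
      (by rw [MufLoop.inv_mul_cancel_right, MufLoop.one_mul, ha.1, hb.1])
      (by rw [MufLoop.inv_mul_cancel_right, MufLoop.one_mul, ha.2, hb.2])
    rwa [D.fr_one, D.fi_one] at this

lemma associatorSet_subset_ker : associatorSet (· * · : G → G → G) ⊆ D.ker := by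
  rintro w ⟨x, y, z, h⟩
  have hw := D.fr_eq_zero_of_fr_associator (congrArg D.fr h)
  exact ⟨hw, D.ii_eq_zero_iff.1 (D.ii_eq_zero_and_snd_eq_of_associator hw (congrArg D.ii h)).1⟩

lemma genSubloopM_associatorSet_subset_ker :
    genSubloopM (· * · : G → G → G) 1 (associatorSet (· * ·)) ⊆ D.ker :=
  genSubloopM_subset_s12 D.isSubloopM_ker D.associatorSet_subset_ker

theorem genSubloopM_associatorSet_eq :
    genSubloopM (· * · : G → G → G) 1 (associatorSet (· * ·))
      = genSubloopM D.dmul 1 (associatorSet D.dmul) := by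
  rw [D.associatorSet_dmul]
  exact genSubloopM_eq_of_eqOn D.isSubloopM_ker D.associatorSet_subset_ker
    MufLoop.existsUnique_mul_left_eq MufLoop.existsUnique_mul_right_eq
    D.existsUnique_dmul_left_eq D.existsUnique_dmul_right_eq
    fun a ha b hb => (D.dmul_eq_mul_of_mem_ker ha hb).symm

end Kernel

end DihedralData

theorem stmt12_general (m : ℕ) (hm : 0 < m) (G : Type*) [MufLoop G]
    (fi : G → ZMod (2 * m)) (fr : G → ZMod 2)
    (hfr : ∀ x y : G, fr (x * y) = fr x + fr y)
    (hfi : ∀ x y : G, fi (x * y) = (if fr y = 0 then fi x else -fi x) + fi y)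
    (S : Set G)
    (hSker : ∀ x : G, x ∈ S ↔ (fi x = 0 ∧ fr x = 0))
    (ii : G → ℤ)
    (hiiM : ∀ x : G, ii x ∈ Set.Icc (1 - (m : ℤ)) (m : ℤ))
    (hii : ∀ x : G, ((ii x : ZMod (2 * m))) = fi x)
    (h : G) (hhS : h ∈ S)
    (hhN : h ∈ nucSetM (· * · : G → G → G))
    (hhZ0 : ∀ y : G, fr y = 0 → h * y = y * h)
    (hhG1 : ∀ x : G, fr x ≠ 0 → (h * x) * h = x) :
    -- (G,*) is a Moufang loop:
    (∀ x : G, dmulM m fr ii h 1 x = x ∧ dmulM m fr ii h x 1 = x) ∧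
    (∀ a b : G, (∃! x : G, dmulM m fr ii h a x = b) ∧
      (∃! y : G, dmulM m fr ii h y a = b)) ∧
    (∀ x y z : G, dmulM m fr ii h (dmulM m fr ii h (dmulM m fr ii h x y) x) z
        = dmulM m fr ii h x (dmulM m fr ii h y (dmulM m fr ii h x z))) ∧
    -- the associators coincide:
    (∀ x y z w : G, (x * y) * z = (x * (y * z)) * w ↔
        dmulM m fr ii h (dmulM m fr ii h x y) z
          = dmulM m fr ii h (dmulM m fr ii h x (dmulM m fr ii h y z)) w) ∧
    -- the associator subloops coincide, as loops:
    (genSubloopM (· * · : G → G → G) 1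
        {w : G | ∃ x y z : G, (x * y) * z = (x * (y * z)) * w}
      = genSubloopM (dmulM m fr ii h) 1
        {w : G | ∃ x y z : G, dmulM m fr ii h (dmulM m fr ii h x y) z
            = dmulM m fr ii h (dmulM m fr ii h x (dmulM m fr ii h y z)) w}) ∧
    (∀ a ∈ genSubloopM (· * · : G → G → G) 1
        {w : G | ∃ x y z : G, (x * y) * z = (x * (y * z)) * w},
      ∀ b ∈ genSubloopM (· * · : G → G → G) 1
        {w : G | ∃ x y z : G, (x * y) * z = (x * (y * z)) * w},
      a * b = dmulM m fr ii h a b) ∧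
    -- the nuclei coincide as sets:
    nucSetM (· * · : G → G → G) = nucSetM (dmulM m fr ii h) := by
  obtain ⟨hfih, hfrh⟩ := (hSker h).mp hhS
  let D : DihedralData m G :=
    ⟨fi, fr, ii, h, hm, hfr, hfi, hiiM, hii, hfrh, hfih, hhN, hhZ0, hhG1⟩
  refine ⟨fun x => ⟨D.dmul_one_left x, D.dmul_one_right x⟩,
    fun a b => ⟨D.existsUnique_dmul_left_eq a b, D.existsUnique_dmul_right_eq a b⟩,
    D.dmul_moufang, D.mul_associator_iff, D.genSubloopM_associatorSet_eq,
    fun a ha b hb => ?_, D.nucSetM_eq_nucSetM_dmul⟩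
  have hker := D.genSubloopM_associatorSet_subset_ker
  exact (D.dmul_eq_mul_of_mem_ker (hker ha) (hker hb)).symm

/-- Dihedral construction for Moufang loops (Theorem "Dihedral"): under condition
(D) — S ⊴ G with G/S dihedral of order 4m generated by involutions β,γ with
α = βγ of order 2m (encoded by the index maps fi, fr giving the coset
β^{fr x} α^{fi x} of x, their multiplication rules, and surjectivity),
1 ≠ h ∈ S ∩ Z(G₀) ∩ N(G) with hxh = x for x ∈ G₁ — the groupoid (G,*) is a
Moufang loop, the associators of (G,·) and (G,*) coincide, the associator
subloops coincide as loops, and the nuclei coincide as sets. -/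
theorem stmt12 (m : ℕ) (hm : 0 < m) (G : Type*) [MufLoop G]
    (fi : G → ZMod (2 * m)) (fr : G → ZMod 2)
    (hfr : ∀ x y : G, fr (x * y) = fr x + fr y)
    (hfi : ∀ x y : G, fi (x * y) = (if fr y = 0 then fi x else -fi x) + fi y)
    (hsurj : ∀ p : ZMod (2 * m) × ZMod 2, ∃ x : G, fi x = p.1 ∧ fr x = p.2)
    (S : Set G) (hSnormal : IsNormalSubloopM (· * · : G → G → G) 1 S)
    (hSker : ∀ x : G, x ∈ S ↔ (fi x = 0 ∧ fr x = 0))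
    (ii : G → ℤ)
    (hiiM : ∀ x : G, ii x ∈ Set.Icc (1 - (m : ℤ)) (m : ℤ))
    (hii : ∀ x : G, ((ii x : ZMod (2 * m))) = fi x)
    (h : G) (hh1 : h ≠ 1) (hhS : h ∈ S)
    (hhN : h ∈ nucSetM (· * · : G → G → G))
    (hhZ0 : ∀ y : G, fr y = 0 → h * y = y * h)
    (hhG1 : ∀ x : G, fr x ≠ 0 → (h * x) * h = x) :
    -- (G,*) is a Moufang loop:
    (∀ x : G, dmulM m fr ii h 1 x = x ∧ dmulM m fr ii h x 1 = x) ∧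
    (∀ a b : G, (∃! x : G, dmulM m fr ii h a x = b) ∧
      (∃! y : G, dmulM m fr ii h y a = b)) ∧
    (∀ x y z : G, dmulM m fr ii h (dmulM m fr ii h (dmulM m fr ii h x y) x) z
        = dmulM m fr ii h x (dmulM m fr ii h y (dmulM m fr ii h x z))) ∧
    -- the associators coincide:
    (∀ x y z w : G, (x * y) * z = (x * (y * z)) * w ↔
        dmulM m fr ii h (dmulM m fr ii h x y) z
          = dmulM m fr ii h (dmulM m fr ii h x (dmulM m fr ii h y z)) w) ∧
    -- the associator subloops coincide, as loops:
    (genSubloopM (· * · : G → G → G) 1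
        {w : G | ∃ x y z : G, (x * y) * z = (x * (y * z)) * w}
      = genSubloopM (dmulM m fr ii h) 1
        {w : G | ∃ x y z : G, dmulM m fr ii h (dmulM m fr ii h x y) z
            = dmulM m fr ii h (dmulM m fr ii h x (dmulM m fr ii h y z)) w}) ∧
    (∀ a ∈ genSubloopM (· * · : G → G → G) 1
        {w : G | ∃ x y z : G, (x * y) * z = (x * (y * z)) * w},
      ∀ b ∈ genSubloopM (· * · : G → G → G) 1
        {w : G | ∃ x y z : G, (x * y) * z = (x * (y * z)) * w},
      a * b = dmulM m fr ii h a b) ∧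
    -- the nuclei coincide as sets:
    nucSetM (· * · : G → G → G) = nucSetM (dmulM m fr ii h) :=
  stmt12_general m hm G fi fr hfr hfi S hSker ii hiiM hii h hhS hhN hhZ0 hhG1
end

section
/- Under the dihedral condition (D), if y∈N(G) then (ex)*y = e(x*y) and (x*y)f = x*(yf) for every x∈G, where e∈β, f∈γ and * is defined by x*y = xy·h^{(-1)^r σ(i+j)}. -/
/-- Lemma EF: under condition (D) (encoded as in the dihedral construction), with
e ∈ β (i.e. fr e = 1, fi e = 0) and f ∈ γ (i.e. fr f = 1, fi f = 1), one has
(ex)*y = e(x*y) and (x*y)f = x*(yf) whenever y lies in the nucleus N(G). -/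
theorem stmt13 (m : ℕ) (hm : 0 < m) (G : Type*) [MufLoop G]
    (fi : G → ZMod (2 * m)) (fr : G → ZMod 2)
    (hfr : ∀ x y : G, fr (x * y) = fr x + fr y)
    (hfi : ∀ x y : G, fi (x * y) = (if fr y = 0 then fi x else -fi x) + fi y)
    (hsurj : ∀ p : ZMod (2 * m) × ZMod 2, ∃ x : G, fi x = p.1 ∧ fr x = p.2)
    (S : Set G) (hSnormal : IsNormalSubloopM (· * · : G → G → G) 1 S)
    (hSker : ∀ x : G, x ∈ S ↔ (fi x = 0 ∧ fr x = 0))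
    (ii : G → ℤ)
    (hiiM : ∀ x : G, ii x ∈ Set.Icc (1 - (m : ℤ)) (m : ℤ))
    (hii : ∀ x : G, ((ii x : ZMod (2 * m))) = fi x)
    (h : G) (hh1 : h ≠ 1) (hhS : h ∈ S)
    (hhN : h ∈ nucSetM (· * · : G → G → G))
    (hhZ0 : ∀ y : G, fr y = 0 → h * y = y * h)
    (hhG1 : ∀ x : G, fr x ≠ 0 → (h * x) * h = x)
    (e : G) (hre : fr e = 1) (hie : fi e = 0)
    (fel : G) (hrf : fr fel = 1) (hif : fi fel = 1) :
    ∀ x y : G, y ∈ nucSetM (· * · : G → G → G) →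
      dmulM m fr ii h (e * x) y = e * dmulM m fr ii h x y ∧
      (dmulM m fr ii h x y) * fel = dmulM m fr ii h x (y * fel) := by
  -- basic facts
  have mul_one' := MufLoop.mul_one (Q := G)
  have one_mul' := MufLoop.one_mul (Q := G)
  have mic := MufLoop.mul_inv_cancel_right (Q := G)
  have imc := MufLoop.inv_mul_cancel_right (Q := G)
  have micl := MufLoop.mul_inv_cancel_left (Q := G)
  have imcl := MufLoop.inv_mul_cancel_left (Q := G)
  have mulinv : ∀ a : G, a * a⁻¹ = 1 := by
    intro a; have := mic 1 a; rwa [one_mul'] at this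
  have frone : fr (1 : G) = 0 := by
    have h1 := hfr 1 1
    rw [mul_one'] at h1
    nth_rewrite 1 [← add_zero (fr (1:G))] at h1
    exact (add_left_cancel h1).symm
  have frinv : ∀ a : G, fr a⁻¹ = -fr a := by
    intro a
    have h1 := hfr a a⁻¹
    rw [mulinv, frone] at h1
    linear_combination -h1
  have hfr_h : fr h = 0 := ((hSker h).1 hhS).2
  -- nucleus of h and h⁻¹
  have hN : ∀ a b : G, h * (a * b) = (h * a) * b ∧ a * (h * b) = (a * h) * b ∧
      a * (b * h) = (a * b) * h := hhN
  have hNi : ∀ a b : G, h⁻¹ * (a * b) = (h⁻¹ * a) * b ∧ a * (h⁻¹ * b) = (a * h⁻¹) * b ∧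
      a * (b * h⁻¹) = (a * b) * h⁻¹ := by
    intro a b
    refine ⟨?_, ?_, ?_⟩
    · have := (hN (h⁻¹ * a) b).1
      rw [micl] at this
      rw [← this, imcl]
    · have h2 := (hN (a * h⁻¹) (h⁻¹ * b)).2.1
      rw [micl, imc] at h2
      exact h2.symm
    · have h3 := (hN a (b * h⁻¹)).2.2
      rw [imc] at h3
      rw [h3, mic]
  -- commuting relations for fr ≠ 0
  have hcomm1 : ∀ a : G, fr a ≠ 0 → h * a = a * h⁻¹ := by
    intro a ha
    have h1 := hhG1 a ha
    have := mic (h * a) h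
    rw [h1] at this
    exact this.symm
  have hcomm2 : ∀ a : G, fr a ≠ 0 → h⁻¹ * a = a * h := by
    intro a ha
    have hb : fr (h⁻¹ * a) ≠ 0 := by
      rw [hfr, frinv, hfr_h]; simpa using ha
    have h1 := hhG1 (h⁻¹ * a) hb
    rw [micl] at h1
    exact h1.symm
  -- index facts
  have iiKey : ∀ (a : G) (t : ℤ), 1 - (m : ℤ) ≤ t → t ≤ (m : ℤ) →
      ((t : ZMod (2 * m)) = fi a) → ii a = t := by
    intro a t ht1 ht2 ht
    have h1 := hii a
    have hz : ((ii a - t : ℤ) : ZMod (2 * m)) = 0 := by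
      push_cast
      rw [h1, ht]
      ring
    have hdvd : ((2 * m : ℕ) : ℤ) ∣ ii a - t := by
      exact_mod_cast (ZMod.intCast_zmod_eq_zero_iff_dvd _ _).mp hz
    obtain ⟨c, hc⟩ := hdvd
    have hb := hiiM a
    simp only [Set.mem_Icc] at hb
    have hc0 : c = 0 := by
      rcases lt_trichotomy c 0 with hlt | heq | hgt
      · exfalso
        have : ((2 * m : ℕ) : ℤ) * c ≤ -(2 * m : ℤ) := by
          push_cast
          nlinarith
        push_cast at this hc
        omega
      · exact heq
      · exfalso
        have : ((2 * m : ℕ) : ℤ) * c ≥ (2 * m : ℤ) := by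
          push_cast
          nlinarith
        push_cast at this hc
        omega
    rw [hc0, mul_zero] at hc
    omega
  -- mzpow values
  have mz0 : mzpow h (0 : ℤ) = 1 := rfl
  have mz1 : mzpow h (1 : ℤ) = h := by
    show mnpow h 1 = h
    simp [mnpow, one_mul']
  have mzneg : mzpow h (-1 : ℤ) = h⁻¹ := by
    show (mnpow h 1)⁻¹ = h⁻¹
    simp [mnpow, one_mul']
  have sgnC : ∀ i : ℤ, sgnM m i = 1 ∨ sgnM m i = 0 ∨ sgnM m i = -1 := by
    intro i; unfold sgnM; split_ifs <;> tauto
  have negC : ∀ j : ℤ, (j = 1 ∨ j = 0 ∨ j = -1) → (-j = 1 ∨ -j = 0 ∨ -j = -1) := by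
    rintro j (rfl | rfl | rfl) <;> norm_num
  have hrf' : fr fel ≠ 0 := by rw [hrf]; decide
  have zmod2 : ∀ a : ZMod 2, a ≠ 0 → a = 1 := by decide
  intro x y hy
  have yN : ∀ a b : G, y * (a * b) = (y * a) * b ∧ a * (y * b) = (a * y) * b ∧
      a * (b * y) = (a * b) * y := hy
  -- index computations
  have fiex : fi (e * x) = fi x := by
    rw [hfi]; split_ifs <;> simp [hie]
  have iiex : ii (e * x) = ii x := by
    refine iiKey (e * x) (ii x) (hiiM x).1 (hiiM x).2 ?_
    rw [hii x, fiex]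
  have fiyf : fi (y * fel) = 1 - fi y := by
    rw [hfi, if_neg hrf', hif]; ring
  have iiyf : ii (y * fel) = 1 - ii y := by
    have hb := hiiM y
    simp only [Set.mem_Icc] at hb
    refine iiKey (y * fel) (1 - ii y) (by omega) (by omega) ?_
    rw [fiyf]
    push_cast
    rw [hii y]
  -- key lemmas
  have keyL : ∀ k : ℤ, (k = 1 ∨ k = 0 ∨ k = -1) →
      e * ((x * y) * mzpow h k) = ((e * x) * y) * mzpow h k := by
    rintro k (rfl | rfl | rfl)
    · rw [mz1, (hN e (x * y)).2.2, (yN e x).2.2]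
    · rw [mz0, mul_one', mul_one', (yN e x).2.2]
    · rw [mzneg, (hNi e (x * y)).2.2, (yN e x).2.2]
  have keyR : ∀ k : ℤ, (k = 1 ∨ k = 0 ∨ k = -1) →
      ((x * y) * mzpow h k) * fel = (x * (y * fel)) * mzpow h (-k) := by
    rintro k (rfl | rfl | rfl)
    · rw [mz1, show ((-1 : ℤ)) = (-1 : ℤ) from rfl, mzneg,
        ← (hN (x * y) fel).2.1, hcomm1 fel hrf', (hNi (x * y) fel).2.2, (yN x fel).2.1]
    · norm_num [mz0, mul_one', (yN x fel).2.1]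
    · rw [mzneg, neg_neg, mz1,
        ← (hNi (x * y) fel).2.1, hcomm2 fel hrf', (hN (x * y) fel).2.2, (yN x fel).2.1]
  constructor
  · by_cases hy0 : fr y = 0
    · simp only [dmulM, if_pos hy0, iiex]
      exact (keyL _ (sgnC _)).symm
    · simp only [dmulM, if_neg hy0, iiex]
      exact (keyL _ (negC _ (sgnC _))).symm
  · by_cases hy0 : fr y = 0
    · have hfryf : fr (y * fel) ≠ 0 := by
        rw [hfr, hy0, hrf]; decide
      simp only [dmulM, if_pos hy0, if_neg hfryf, iiyf]
      rw [show ii x + (1 - (1 - ii y)) = ii x + ii y by ring]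
      exact keyR _ (sgnC _)
    · have hfryf : fr (y * fel) = 0 := by
        rw [hfr, zmod2 _ hy0, hrf]; decide
      simp only [dmulM, if_neg hy0, if_pos hfryf, iiyf]
      have := keyR (-sgnM m (ii x + (1 - ii y))) (negC _ (sgnC _))
      rwa [neg_neg] at this
end

section
/- Let f: V → F be a map on a finite vector space V over F=GF(2) with f(0)=0. Then the n-th derived form f_n(v₁,...,v_n) vanishes whenever v₁,...,v_n are linearly dependent over F. -/
/-- The n-th derived form of f : V → GF(2):
f_n(v₁,...,v_n) = Σ_{∅ ≠ I ⊆ {1,...,n}} f(Σ_{i∈I} v_i). -/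
def derivedForm {V : Type*} [AddCommGroup V] [Module (ZMod 2) V]
    (f : V → ZMod 2) (n : ℕ) (v : Fin n → V) : ZMod 2 :=
  ∑ I ∈ Finset.univ.powerset.filter (fun I : Finset (Fin n) => I ≠ ∅),
    f (∑ i ∈ I, v i)

lemma aux_add_self {V : Type*} [AddCommGroup V] [Module (ZMod 2) V] (x : V) : x + x = 0 := by
  have := two_smul (ZMod 2) x
  have h2 : (2 : ZMod 2) = 0 := by decide
  rw [h2, zero_smul] at this
  exact this.symm

lemma aux_symmDiff {V : Type*} [AddCommGroup V] [Module (ZMod 2) V] {n : ℕ} (v : Fin n → V)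
    (I S : Finset (Fin n)) (hS : ∑ i ∈ S, v i = 0) :
    ∑ i ∈ symmDiff I S, v i = ∑ i ∈ I, v i := by
  classical
  have h1 : ∑ i ∈ symmDiff I S, v i = ∑ i ∈ I \ S, v i + ∑ i ∈ S \ I, v i := by
    rw [symmDiff_def, Finset.sup_eq_union, Finset.sum_union disjoint_sdiff_sdiff]
  have h2 : ∑ i ∈ I, v i = ∑ i ∈ I \ S, v i + ∑ i ∈ I ∩ S, v i := by
    rw [← Finset.sum_union (Finset.disjoint_sdiff_inter I S), Finset.sdiff_union_inter]
  have h3 : (0 : V) = ∑ i ∈ S \ I, v i + ∑ i ∈ S ∩ I, v i := by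
    rw [← Finset.sum_union (Finset.disjoint_sdiff_inter S I), Finset.sdiff_union_inter, hS]
  have h5 : ∑ i ∈ S \ I, v i = ∑ i ∈ I ∩ S, v i := by
    rw [Finset.inter_comm]
    have h6 := aux_add_self (∑ i ∈ S ∩ I, v i)
    calc ∑ i ∈ S \ I, v i
        = ∑ i ∈ S \ I, v i + (∑ i ∈ S ∩ I, v i + ∑ i ∈ S ∩ I, v i) := by rw [h6, add_zero]
      _ = (∑ i ∈ S \ I, v i + ∑ i ∈ S ∩ I, v i) + ∑ i ∈ S ∩ I, v i := by abel
      _ = ∑ i ∈ S ∩ I, v i := by rw [← h3, zero_add]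
  rw [h1, h5, ← h2]

/-- The n-th derived form of f : V → GF(2) with f(0)=0, on a finite vector space V
over GF(2), vanishes on every linearly dependent tuple. -/
theorem stmt15 {V : Type*} [AddCommGroup V] [Module (ZMod 2) V] [Finite V]
    (f : V → ZMod 2) (hf0 : f 0 = 0) (n : ℕ) (v : Fin n → V)
    (hdep : ¬ LinearIndependent (ZMod 2) v) :
    derivedForm f n v = 0 := by
  classical
  obtain ⟨g, hg, i₀, hi₀⟩ := Fintype.not_linearIndependent_iff.mp hdep
  set S : Finset (Fin n) := Finset.univ.filter (fun i => g i = 1) with hSdef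
  have h01 : ∀ a : ZMod 2, a = 0 ∨ a = 1 := by decide
  have hSsum : ∑ i ∈ S, v i = 0 := by
    rw [← hg, hSdef, Finset.sum_filter]
    apply Finset.sum_congr rfl
    intro i _
    rcases h01 (g i) with h | h <;> simp [h]
  have hSne : S ≠ ∅ := by
    intro h
    have : i₀ ∈ S := by
      simp only [hSdef, Finset.mem_filter, Finset.mem_univ, true_and]
      rcases h01 (g i₀) with h' | h'
      · exact absurd h' hi₀
      · exact h'
    rw [h] at this; exact absurd this (Finset.notMem_empty i₀)
  -- sum over all subsets equals derivedForm (since f 0 = 0)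
  have hall : derivedForm f n v = ∑ I ∈ (Finset.univ : Finset (Fin n)).powerset,
      f (∑ i ∈ I, v i) := by
    have hsplit := Finset.sum_filter_add_sum_filter_not
      (Finset.univ.powerset : Finset (Finset (Fin n))) (fun I => I ≠ ∅)
      (fun I => f (∑ i ∈ I, v i))
    have hemp : Finset.univ.powerset.filter (fun I : Finset (Fin n) => ¬ I ≠ ∅) = {∅} := by
      ext I; simp
    rw [derivedForm, ← hsplit, hemp, Finset.sum_singleton, Finset.sum_empty, hf0, add_zero]
  rw [hall]
  apply Finset.sum_ninvolution (fun I => symmDiff I S)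
  · intro I
    rw [aux_symmDiff v I S hSsum]
    exact aux_add_self _
  · intro I _
    simp only [ne_eq]
    intro h
    apply hSne
    have := congrArg (fun J => symmDiff I J) h.symm
    simpa [symmDiff_self] using symmDiff_eq_left.mp h
  · intro I
    simp [Finset.mem_powerset]
  · intro I
    simp [symmDiff_symmDiff_cancel_right]
end

section
/- Let G be a finite group and M(G,2) the Chein loop on G∪Ḡ with multiplication x∘y=xy, x∘ȳ=(yx)‾, x̄∘y=(xy⁻¹)‾, x̄∘ȳ=y⁻¹x. Then M(G,2) is a Moufang loop, and it is associative if and only if G is abelian. -/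
/-- The Chein loop M(G,2) on G ∪ Ḡ (the copy Ḡ realized via Sum.inr):
x∘y = xy, x∘ȳ = (yx)‾, x̄∘y = (xy⁻¹)‾, x̄∘ȳ = y⁻¹x. -/
def cheinMul {G : Type*} [Group G] : G ⊕ G → G ⊕ G → G ⊕ G
  | Sum.inl x, Sum.inl y => Sum.inl (x * y)
  | Sum.inl x, Sum.inr y => Sum.inr (y * x)
  | Sum.inr x, Sum.inl y => Sum.inr (x * y⁻¹)
  | Sum.inr x, Sum.inr y => Sum.inl (y⁻¹ * x)

/-- For a finite group G, the Chein groupoid M(G,2) is a Moufang loop (it has the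
two-sided identity 1̄... namely Sum.inl 1, all equations ax = b and ya = b are
uniquely solvable, and the Moufang identity holds), and it is associative if and
only if G is abelian. -/
theorem stmt16 (G : Type*) [Group G] [Finite G] :
    (∀ p : G ⊕ G, cheinMul (Sum.inl 1) p = p ∧ cheinMul p (Sum.inl 1) = p) ∧
    (∀ a b : G ⊕ G, (∃! x : G ⊕ G, cheinMul a x = b) ∧
      (∃! y : G ⊕ G, cheinMul y a = b)) ∧
    (∀ p q r : G ⊕ G,
      cheinMul (cheinMul (cheinMul p q) p) r = cheinMul p (cheinMul q (cheinMul p r))) ∧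
    ((∀ p q r : G ⊕ G, cheinMul (cheinMul p q) r = cheinMul p (cheinMul q r)) ↔
      (∀ a b : G, a * b = b * a)) := by
  refine ⟨?_, ?_, ?_, ?_⟩
  · rintro (x | x) <;> simp [cheinMul]
  · rintro (a | a) (b | b)
    · exact ⟨⟨Sum.inl (a⁻¹ * b), by simp [cheinMul],
        by rintro (x | x) h <;> simp_all [cheinMul] <;> subst h <;> group⟩,
      ⟨Sum.inl (b * a⁻¹), by simp [cheinMul],
        by rintro (x | x) h <;> simp_all [cheinMul] <;> subst h <;> group⟩⟩
    · exact ⟨⟨Sum.inr (b * a⁻¹), by simp [cheinMul],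
        by rintro (x | x) h <;> simp_all [cheinMul] <;> subst h <;> group⟩,
      ⟨Sum.inr (b * a), by simp [cheinMul],
        by rintro (x | x) h <;> simp_all [cheinMul] <;> subst h <;> group⟩⟩
    · exact ⟨⟨Sum.inr (a * b⁻¹), by simp [cheinMul],
        by rintro (x | x) h <;> simp_all [cheinMul] <;> subst h <;> group⟩,
      ⟨Sum.inr (a * b), by simp [cheinMul],
        by rintro (x | x) h <;> simp_all [cheinMul] <;> subst h <;> group⟩⟩
    · exact ⟨⟨Sum.inl (b⁻¹ * a), by simp [cheinMul],
        by rintro (x | x) h <;> simp_all [cheinMul] <;> subst h <;> group⟩,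
      ⟨Sum.inl (a⁻¹ * b), by simp [cheinMul],
        by rintro (x | x) h <;> simp_all [cheinMul] <;> subst h <;> group⟩⟩
  · rintro (p | p) (q | q) (r | r) <;> simp [cheinMul] <;> group
  · constructor
    · intro h a b
      have := h (Sum.inl a) (Sum.inl b) (Sum.inr 1)
      simpa [cheinMul] using this
    · intro h p q r
      letI : CommGroup G := { mul_comm := h }
      rcases p with p | p <;> rcases q with q | q <;> rcases r with r | r <;>
        simp [cheinMul, mul_comm, mul_left_comm, mul_assoc]
end

section
/- Let G be a group, 1≠h∈Z(G), and let θ be an involutory antiautomorphism of G with θ(h)=h and xθ(x)∈Z(G) for all x. Then M(G,θ,h) on G∪Ḡ with x∘y=xy, x∘ȳ=(yx)‾, x̄∘y=(xθ(y))‾, x̄∘ȳ=θ(y)xh is a Moufang loop, associative if and only if G is abelian. Furthermore, for θ = inversion x ↦ x⁻¹, M(G,⁻¹,h) is never isomorphic to M(H,2) for any group H, since every element of H̄ in M(H,2) is an involution while every element of Ḡ in M(G,⁻¹,h) has order 2|h|. -/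
/-- The Chein-type loop M(G,θ,h) on G ∪ Ḡ:
x∘y = xy, x∘ȳ = (yx)‾, x̄∘y = (xθ(y))‾, x̄∘ȳ = θ(y)xh. -/
def cheinThetaMul {G : Type*} [Group G] (θ : G → G) (h : G) :
    G ⊕ G → G ⊕ G → G ⊕ G
  | Sum.inl x, Sum.inl y => Sum.inl (x * y)
  | Sum.inl x, Sum.inr y => Sum.inr (y * x)
  | Sum.inr x, Sum.inl y => Sum.inr (x * θ y)
  | Sum.inr x, Sum.inr y => Sum.inl (θ y * x * h)

/-- Let θ be an involutory antiautomorphism of the group G and 1 ≠ h ∈ Z(G) with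
θ(h) = h and xθ(x) ∈ Z(G) for all x.  Then M(G,θ,h) is a Moufang loop, which is
associative iff G is abelian.  Moreover, when θ is the inversion map, every
element x̄ ∈ Ḡ satisfies x̄∘x̄ = h (so has order 2|h|), whereas every element of
H̄ in M(H,2) is an involution, and M(G,⁻¹,h) is not isomorphic to M(H,2) for any
group H. -/
theorem stmt19 {G : Type*} [Group G] (θ : G → G) (h : G)
    (hθanti : ∀ x y : G, θ (x * y) = θ y * θ x)
    (hθinvol : ∀ x : G, θ (θ x) = x)
    (hθh : θ h = h) (hh1 : h ≠ 1) (hhZ : h ∈ Subgroup.center G)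
    (hxθ : ∀ x : G, x * θ x ∈ Subgroup.center G) :
    -- M(G,θ,h) is a Moufang loop:
    (∀ p : G ⊕ G, cheinThetaMul θ h (Sum.inl 1) p = p ∧
      cheinThetaMul θ h p (Sum.inl 1) = p) ∧
    (∀ a b : G ⊕ G, (∃! x : G ⊕ G, cheinThetaMul θ h a x = b) ∧
      (∃! y : G ⊕ G, cheinThetaMul θ h y a = b)) ∧
    (∀ p q r : G ⊕ G,
      cheinThetaMul θ h (cheinThetaMul θ h (cheinThetaMul θ h p q) p) r
        = cheinThetaMul θ h p (cheinThetaMul θ h q (cheinThetaMul θ h p r))) ∧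
    -- associative iff G is abelian:
    ((∀ p q r : G ⊕ G, cheinThetaMul θ h (cheinThetaMul θ h p q) r
        = cheinThetaMul θ h p (cheinThetaMul θ h q r)) ↔
      (∀ a b : G, a * b = b * a)) ∧
    -- for θ the inversion map:
    ((∀ x : G, θ x = x⁻¹) →
      (∀ x : G, cheinThetaMul θ h (Sum.inr x) (Sum.inr x) = Sum.inl h) ∧
      (∀ (H : Type*) (_ : Group H) (x : H),
        cheinMul (Sum.inr x) (Sum.inr x) = Sum.inl (1 : H)) ∧
      (∀ (H : Type*) (_ : Group H), ¬ ∃ e : (G ⊕ G) ≃ (H ⊕ H),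
        ∀ p q : G ⊕ G, e (cheinThetaMul θ h p q) = cheinMul (e p) (e q))) := by
  have hc : ∀ a : G, a * h = h * a := Subgroup.mem_center_iff.mp hhZ
  have hcx : ∀ x a : G, a * (x * θ x) = (x * θ x) * a := fun x =>
    Subgroup.mem_center_iff.mp (hxθ x)
  have hθ1 : θ 1 = 1 := by
    have h1 := hθanti 1 1; rw [mul_one] at h1; exact (left_eq_mul.mp h1)
  have hθinv : ∀ x : G, θ x⁻¹ = (θ x)⁻¹ := by
    intro x
    have h1 := hθanti x⁻¹ x
    rw [inv_mul_cancel, hθ1] at h1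
    exact (eq_inv_of_mul_eq_one_right h1.symm)
  have hth : ∀ a : G, θ a * a = a * θ a := by
    intro a
    have h1 := hcx a a⁻¹
    rw [inv_mul_cancel_left] at h1
    conv_lhs => rw [h1]
    rw [inv_mul_cancel_right]
  have hth' : ∀ a b : G, θ a * (a * b) = a * (θ a * b) := by
    intro a b; rw [← mul_assoc, hth, mul_assoc]
  have hH : ∀ a b : G, a * (h * b) = h * (a * b) := by
    intro a b; rw [← mul_assoc, hc, mul_assoc]
  have hX : ∀ x a b : G, a * (x * (θ x * b)) = x * (θ x * (a * b)) := by
    intro x a b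
    simp only [← mul_assoc]
    rw [mul_assoc a, hcx]
  have hX1 : ∀ x a : G, a * (x * θ x) = x * (θ x * a) := by
    intro x a; rw [hcx, mul_assoc]
  refine ⟨?_, ?_, ?_, ?_, ?_⟩
  · -- identity
    rintro (x | x) <;> simp [cheinThetaMul, hθ1]
  · -- latin square
    intro a b
    constructor
    · -- left division
      rcases a with u | u <;> rcases b with v | v
      · refine ⟨Sum.inl (u⁻¹ * v), by simp [cheinThetaMul], ?_⟩
        rintro (w | w) hw
        · simp only [cheinThetaMul, Sum.inl.injEq] at hw; subst hw; simp
        · simp [cheinThetaMul] at hw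
      · refine ⟨Sum.inr (v * u⁻¹), by simp [cheinThetaMul], ?_⟩
        rintro (w | w) hw
        · simp [cheinThetaMul] at hw
        · simp only [cheinThetaMul, Sum.inr.injEq] at hw; subst hw; simp
      · refine ⟨Sum.inr (θ (v * h⁻¹ * u⁻¹)), by
          simp [cheinThetaMul, hθinvol, mul_assoc], ?_⟩
        rintro (w | w) hw
        · simp [cheinThetaMul] at hw
        · simp only [cheinThetaMul, Sum.inl.injEq] at hw; subst hw
          simp [mul_assoc, hθinvol]
      · refine ⟨Sum.inl (θ (u⁻¹ * v)), by simp [cheinThetaMul, hθinvol], ?_⟩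
        rintro (w | w) hw
        · simp only [cheinThetaMul, Sum.inr.injEq] at hw; subst hw
          simp [hθinvol]
        · simp [cheinThetaMul] at hw
    · -- right division
      rcases a with u | u <;> rcases b with v | v
      · refine ⟨Sum.inl (v * u⁻¹), by simp [cheinThetaMul], ?_⟩
        rintro (w | w) hw
        · simp only [cheinThetaMul, Sum.inl.injEq] at hw; subst hw; simp
        · simp [cheinThetaMul] at hw
      · refine ⟨Sum.inr (v * (θ u)⁻¹), by simp [cheinThetaMul], ?_⟩
        rintro (w | w) hw
        · simp [cheinThetaMul] at hw
        · simp only [cheinThetaMul, Sum.inr.injEq] at hw; subst hw; simp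
      · refine ⟨Sum.inr ((θ u)⁻¹ * v * h⁻¹), by
          simp [cheinThetaMul, mul_assoc], ?_⟩
        rintro (w | w) hw
        · simp [cheinThetaMul] at hw
        · simp only [cheinThetaMul, Sum.inl.injEq] at hw; subst hw
          simp [mul_assoc]
      · refine ⟨Sum.inl (u⁻¹ * v), by simp [cheinThetaMul], ?_⟩
        rintro (w | w) hw
        · simp only [cheinThetaMul, Sum.inr.injEq] at hw; subst hw; simp
        · simp [cheinThetaMul] at hw
  · -- Moufang
    intro p q r
    rcases p with x | x <;> rcases q with y | y <;> rcases r with z | z <;>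
      simp only [cheinThetaMul, Sum.inl.injEq, Sum.inr.injEq, hθanti, hθinvol,
        hθh, hθ1, hθinv]
    case' inl.inl.inl => simp [mul_assoc]
    case' inl.inl.inr => simp [mul_assoc]
    all_goals simp only [mul_assoc]
    case inl.inr.inl => rw [hth, hX1]
    case inl.inr.inr => rw [hX, hX]
    case inr.inl.inl => rw [hth', hth', hX, hX, ← hc]
    case inr.inl.inr => rw [hth', hX, hc (θ y), hH z (θ y), hH (θ x) (z * θ y)]
    case inr.inr.inl => rw [hH x (θ z), hH (θ y)]
    case inr.inr.inr => rw [hH x h, hH (θ y) (x * h)]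
  · -- associative iff abelian
    constructor
    · intro hassoc a b
      have h1 := hassoc (Sum.inl a) (Sum.inl b) (Sum.inr 1)
      simpa [cheinThetaMul] using h1
    · intro hab
      have hlc : ∀ a b c : G, a * (b * c) = b * (a * c) := fun a b c => by
        rw [← mul_assoc, hab a b, mul_assoc]
      intro p q r
      rcases p with x | x <;> rcases q with y | y <;> rcases r with z | z <;>
        simp [cheinThetaMul, hθanti, hθinvol, hθh, hθ1, hθinv, mul_assoc,
          hab, hlc]
  · -- inversion consequences
    intro hinv
    refine ⟨fun x => by simp [cheinThetaMul, hinv], fun H _ x => by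
      simp [cheinMul], ?_⟩
    rintro H _ ⟨e, he⟩
    have h1 : e (Sum.inl 1) = Sum.inl 1 := by
      have h2 := he (Sum.inl 1) (Sum.inl 1)
      simp only [cheinThetaMul, mul_one] at h2
      rcases hE : e (Sum.inl (1 : G)) with a | a
      · rw [hE] at h2
        simp only [cheinMul, Sum.inl.injEq] at h2
        rw [left_eq_mul.mp h2]
      · rw [hE] at h2
        simp [cheinMul] at h2
    have h3 : ∀ x : G, ∃ b : H, e (Sum.inr x) = Sum.inl b := by
      intro x
      rcases hE : e (Sum.inr x) with b | b
      · exact ⟨b, rfl⟩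
      · exfalso
        have h4 := he (Sum.inr x) (Sum.inr x)
        rw [hE] at h4
        have h5 : cheinThetaMul θ h (Sum.inr x) (Sum.inr x) = Sum.inl h := by
          simp [cheinThetaMul, hinv]
        rw [h5] at h4
        simp only [cheinMul, inv_mul_cancel] at h4
        have h6 := e.injective (h4.trans h1.symm)
        simp only [Sum.inl.injEq] at h6
        exact hh1 h6
    obtain ⟨p, hp⟩ : ∃ p, e p = Sum.inr 1 := ⟨e.symm (Sum.inr 1),
      e.apply_symm_apply _⟩
    rcases p with x | x
    · obtain ⟨b, hb⟩ := h3 1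
      have h6 := he (Sum.inl x) (Sum.inr 1)
      rw [hp, hb] at h6
      simp only [cheinThetaMul, cheinMul, one_mul] at h6
      obtain ⟨c, hc2⟩ := h3 x
      rw [hc2] at h6
      exact absurd h6 (by simp)
    · obtain ⟨b, hb⟩ := h3 x
      rw [hb] at hp
      exact absurd hp (by simp)
end
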